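/- arXiv:0704.1556 — 10 statements merged into one kernel-verified Lean document; each statement's English description precedes it below -/
import Mathlib

section
/- For every field k of characteristic 2 there exist elements a, b, c, d, w of the formal power series ring k[[t]] such that: a ≠ 0 and a is not a unit of k[[t]]; each of b, c, d is a 1-unit (congruent to 1 modulo t); c ≠ d; the polynomial X² + aX + b is irreducible in k((t))[X], where k((t)) denotes the field of fractions of k[[t]] (the field of formal Laurent series); and the identity (X + w)(X + c)(X + d) = X·(X² + aX + b) + a holds in k((t))[X]. -/
open Polynomial LaurentSeries

theorem polyaux {R : Type*} [CommRing R] (w c d a b : R)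
    (h1 : w + c + d = a) (h2 : w * c + w * d + c * d = b) (h3 : w * c * d = a) :
    (X + C w) * (X + C c) * (X + C d)
      = X * (X ^ 2 + C a * X + C b) + C a := by
  have hC1 : C w + C c + C d = C a := by rw [← C_add, ← C_add, h1]
  have hC2 : C w * C c + C w * C d + C c * C d = C b := by
    rw [← C_mul, ← C_mul, ← C_mul, ← C_add, ← C_add, h2]
  have hC3 : C w * C c * C d = C a := by rw [← C_mul, ← C_mul, h3]
  linear_combination (X : R[X]) ^ 2 * hC1 + (X : R[X]) * hC2 + hC3


theorem monaux {K : Type*} [CommRing K] [IsDomain K] (A B : K) :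
    (X ^ 2 + C A * X + C B).Monic := by
  rw [add_assoc]
  exact monic_X_pow_add degree_linear_lt

theorem degaux {K : Type*} [CommRing K] [IsDomain K] (A B : K) :
    (X ^ 2 + C A * X + C B).natDegree = 2 := by
  rw [add_assoc, natDegree_add_eq_left_of_degree_lt, natDegree_X_pow]
  rw [degree_X_pow]
  exact degree_linear_lt

set_option maxHeartbeats 1000000 in
/-- For every field `k` of characteristic 2 there exist
`a, b, c, d, w ∈ k⟦t⟧` with `a ≠ 0` not a unit, `b, c, d` 1-units
(constant term 1), `c ≠ d`, `X² + aX + b` irreducible over `k⸨t⸩`,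
and `(X + w)(X + c)(X + d) = X·(X² + aX + b) + a` in `k⸨t⸩[X]`. -/
theorem stmt0 (k : Type*) [Field k] [CharP k 2] :
    ∃ a b c d w : PowerSeries k,
      a ≠ 0 ∧ ¬ IsUnit a ∧
      PowerSeries.constantCoeff b = 1 ∧
      PowerSeries.constantCoeff c = 1 ∧
      PowerSeries.constantCoeff d = 1 ∧
      c ≠ d ∧
      Irreducible (X ^ 2 + C (a : LaurentSeries k) * X + C (b : LaurentSeries k)) ∧
      (X + C (w : LaurentSeries k)) * (X + C (c : LaurentSeries k)) *
          (X + C (d : LaurentSeries k)) =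
        X * (X ^ 2 + C (a : LaurentSeries k) * X + C (b : LaurentSeries k)) +
          C (a : LaurentSeries k) := by
  classical
  have hk2 : (2 : k) = 0 := by exact_mod_cast CharP.cast_eq_zero k 2
  have h2 : (2 : PowerSeries k) = 0 := by
    have h : (2 : PowerSeries k) = PowerSeries.C (2 : k) := by
      rw [← map_ofNat (PowerSeries.C) 2]
    rw [h, hk2, map_zero]
  have coeff1_mul : ∀ f g : PowerSeries k, PowerSeries.coeff 1 (f * g) =
      PowerSeries.coeff 0 f * PowerSeries.coeff 1 g +
      PowerSeries.coeff 1 f * PowerSeries.coeff 0 g := by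
    intro f g
    rw [PowerSeries.coeff_mul, show (Finset.HasAntidiagonal.antidiagonal 1 : Finset (ℕ × ℕ)) = {(0,1),(1,0)} from rfl]
    simp
  obtain ⟨d, hd⟩ : ∃ d : PowerSeries k,
      (1 + PowerSeries.X + PowerSeries.X ^ 2) * d = 1 :=
    ⟨_, PowerSeries.mul_inv_cancel _ (by simp)⟩
  have hd0 : PowerSeries.constantCoeff d = 1 := by
    have h := congrArg (PowerSeries.constantCoeff) hd
    simpa using h
  have he1 : PowerSeries.coeff 1
      (1 + PowerSeries.X + PowerSeries.X ^ 2 : PowerSeries k) = 1 := by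
    simp [PowerSeries.coeff_one, PowerSeries.coeff_X_pow]
  have hd1 : PowerSeries.coeff 1 d = 1 := by
    have h := congrArg (PowerSeries.coeff 1) hd
    rw [coeff1_mul, PowerSeries.coeff_zero_eq_constantCoeff, he1] at h
    simp [hd0, PowerSeries.coeff_one] at h
    linear_combination h - hk2
  have hcd : (1 + PowerSeries.X : PowerSeries k) ≠ d := by
    intro hEq
    rw [← hEq] at hd
    have h1 := hd
    have h3 : (PowerSeries.X : PowerSeries k) ^ 3 = 0 := by
      linear_combination h1 - (PowerSeries.X + PowerSeries.X ^ 2) * h2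
    exact pow_ne_zero 3 PowerSeries.X_ne_zero h3
  have hc0 : PowerSeries.constantCoeff (1 + PowerSeries.X : PowerSeries k) = 1 := by simp
  have ha0 : PowerSeries.constantCoeff
      (PowerSeries.X * (1 + PowerSeries.X) * d) = 0 := by
    simp
  have ha1 : PowerSeries.coeff 1 (PowerSeries.X * (1 + PowerSeries.X) * d) = 1 := by
    rw [mul_assoc, coeff1_mul]
    simp [hd0]
  have hb0 : PowerSeries.constantCoeff
      (PowerSeries.X + PowerSeries.X ^ 2 + d) = 1 := by simp [hd0]
  have hb1 : PowerSeries.coeff 1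
      (PowerSeries.X + PowerSeries.X ^ 2 + d) = 0 := by
    rw [map_add, map_add, hd1]
    simp [PowerSeries.coeff_X_pow]
    linear_combination hk2
  -- scalar identities
  have hs1 : PowerSeries.X + (1 + PowerSeries.X) + d
      = PowerSeries.X * (1 + PowerSeries.X) * d := by
    linear_combination (PowerSeries.X + d) * h2 - hd
  have hs2 : PowerSeries.X * (1 + PowerSeries.X) + PowerSeries.X * d
      + (1 + PowerSeries.X) * d = PowerSeries.X + PowerSeries.X ^ 2 + d := by
    linear_combination (PowerSeries.X * d) * h2
  set F := algebraMap (PowerSeries k) (LaurentSeries k) with hF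
  have hK1 : ((PowerSeries.X : PowerSeries k) : LaurentSeries k) + ((1 + PowerSeries.X : PowerSeries k) : LaurentSeries k) + ((d : PowerSeries k) : LaurentSeries k)
      = ((PowerSeries.X * (1 + PowerSeries.X) * d : PowerSeries k) : LaurentSeries k) := by
    simpa only [map_add, map_mul] using congrArg (HahnSeries.ofPowerSeries ℤ k) hs1
  have hK2 : ((PowerSeries.X : PowerSeries k) : LaurentSeries k) * ((1 + PowerSeries.X : PowerSeries k) : LaurentSeries k) + ((PowerSeries.X : PowerSeries k) : LaurentSeries k) * ((d : PowerSeries k) : LaurentSeries k)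
      + ((1 + PowerSeries.X : PowerSeries k) : LaurentSeries k) * ((d : PowerSeries k) : LaurentSeries k)
      = ((PowerSeries.X + PowerSeries.X ^ 2 + d : PowerSeries k) : LaurentSeries k) := by
    simpa only [map_add, map_mul] using congrArg (HahnSeries.ofPowerSeries ℤ k) hs2
  have hK3 : ((PowerSeries.X : PowerSeries k) : LaurentSeries k) * ((1 + PowerSeries.X : PowerSeries k) : LaurentSeries k) * ((d : PowerSeries k) : LaurentSeries k)
      = ((PowerSeries.X * (1 + PowerSeries.X) * d : PowerSeries k) : LaurentSeries k) := by
    simp only [map_mul]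
  refine ⟨PowerSeries.X * (1 + PowerSeries.X) * d,
    PowerSeries.X + PowerSeries.X ^ 2 + d, 1 + PowerSeries.X, d, PowerSeries.X,
    ?_, ?_, hb0, hc0, hd0, hcd, ?_, ?_⟩
  · refine mul_ne_zero (mul_ne_zero PowerSeries.X_ne_zero ?_) ?_
    · intro h; rw [h] at hc0; simp at hc0
    · intro h; rw [h] at hd0; simp at hd0
  · rw [PowerSeries.isUnit_iff_constantCoeff, ha0]
    exact not_isUnit_zero
  · -- irreducibility
    rw [(monaux _ _).irreducible_iff_roots_eq_zero_of_degree_le_three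
      (by rw [degaux]) (by rw [degaux]; norm_num)]
    rw [Multiset.eq_zero_iff_forall_notMem]
    intro x hx
    rw [mem_roots (monaux _ _).ne_zero] at hx
    simp only [IsRoot, eval_add, eval_mul, eval_pow, eval_X, eval_C] at hx
    have hint : IsIntegral (PowerSeries k) x := by
      refine ⟨Polynomial.X ^ 2
        + Polynomial.C (PowerSeries.X * (1 + PowerSeries.X) * d) * Polynomial.X
        + Polynomial.C (PowerSeries.X + PowerSeries.X ^ 2 + d), monaux _ _, ?_⟩
      simp only [eval₂_add, eval₂_mul, eval₂_pow, eval₂_X, eval₂_C]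
      exact hx
    obtain ⟨y, hy⟩ := IsIntegrallyClosed.isIntegral_iff.mp hint
    have hy2 : y ^ 2 + (PowerSeries.X * (1 + PowerSeries.X) * d) * y
        + (PowerSeries.X + PowerSeries.X ^ 2 + d) = 0 := by
      apply IsFractionRing.injective (PowerSeries k) (LaurentSeries k)
      rw [map_add, map_add, map_mul, map_pow, map_zero, hy]
      exact hx
    have c0 := congrArg (PowerSeries.coeff 0) hy2
    rw [pow_two, map_add, map_add] at c0
    rw [PowerSeries.coeff_zero_eq_constantCoeff, map_mul, map_mul, ha0, hb0,
      zero_mul, map_zero] at c0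
    have hy0 : PowerSeries.constantCoeff y = 1 := by
      have hsq : (PowerSeries.constantCoeff y - 1) ^ 2 = 0 := by
        linear_combination c0 - (PowerSeries.constantCoeff y) * hk2
      have h := pow_eq_zero_iff (two_ne_zero) |>.mp hsq
      exact sub_eq_zero.mp h
    have c1 := congrArg (PowerSeries.coeff 1) hy2
    rw [pow_two, map_add, map_add, coeff1_mul, coeff1_mul, map_zero] at c1
    rw [PowerSeries.coeff_zero_eq_constantCoeff, hy0, ha0, ha1, hb1] at c1
    have hcontr : (1 : k) = 0 := by
      linear_combination c1 - (PowerSeries.coeff 1 y) * hk2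
    exact one_ne_zero hcontr
  · -- the polynomial identity
    exact polyaux _ _ _ _ _ hK1 hK2 hK3
end

section
/- Let k be a field of characteristic 2. The polynomial X² + ((t + t² + t³)/(1 + t))·X + (1 + t² + t³) is irreducible in k((t))[X]. -/
open Polynomial LaurentSeries

/-- For `k` of characteristic 2, the polynomial
`X² + ((t + t² + t³)/(1 + t))·X + (1 + t² + t³)` is irreducible in
`k⸨t⸩[X]`. -/
theorem stmt2 (k : Type*) [Field k] [CharP k 2] :
    letI t : LaurentSeries k := (PowerSeries.X : PowerSeries k)
    Irreducible (X ^ 2 + C ((t + t ^ 2 + t ^ 3) / (1 + t)) * X +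
      C (1 + t ^ 2 + t ^ 3)) := by
  set t : LaurentSeries k := ((PowerSeries.X : PowerSeries k) : LaurentSeries k) with ht
  haveI hK2 : CharP (LaurentSeries k) 2 :=
    charP_of_injective_algebraMap (algebraMap k (LaurentSeries k)).injective 2
  have h2K : (2 : LaurentSeries k) = 0 := by exact_mod_cast CharP.cast_eq_zero (LaurentSeries k) 2
  have h2k : (2 : k) = 0 := by exact_mod_cast CharP.cast_eq_zero k 2
  set b : LaurentSeries k := (t + t ^ 2 + t ^ 3) / (1 + t) with hb
  set c : LaurentSeries k := 1 + t ^ 2 + t ^ 3 with hc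
  have h1t : (1 : LaurentSeries k) + t ≠ 0 := by
    intro h
    have h' := congrArg (fun f => HahnSeries.coeff f 0) h
    simp [ht, HahnSeries.ofPowerSeries_X] at h'
  by_contra hirr
  have hrw : (X ^ 2 + C b * X + C c : (LaurentSeries k)[X]) = C 1 * X ^ 2 + C b * X + C c := by
    simp
  have hmonic : (X ^ 2 + C b * X + C c : (LaurentSeries k)[X]).Monic := by
    rw [Monic, hrw, leadingCoeff_quadratic one_ne_zero]
  have hdeg : (X ^ 2 + C b * X + C c : (LaurentSeries k)[X]).natDegree = 2 := by
    rw [hrw, natDegree_quadratic one_ne_zero]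
  obtain ⟨y, z, h0, h1⟩ := (hmonic.not_irreducible_iff_exists_add_mul_eq_coeff hdeg).mp hirr
  simp only [coeff_add, coeff_C_mul, coeff_X_pow, coeff_C, coeff_X] at h0 h1
  norm_num at h0 h1
  -- `y` is a root of the quadratic
  have hy : y ^ 2 + b * y + c = 0 := by
    rw [h0, h1]
    linear_combination (y ^ 2 + y * z) * h2K
  -- clear denominators: `w = (1+t)y` satisfies a monic integral equation over `k⟦t⟧`
  set A : PowerSeries k := PowerSeries.X + PowerSeries.X ^ 2 + PowerSeries.X ^ 3 with hA
  set D : PowerSeries k :=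
    1 + PowerSeries.X ^ 3 + PowerSeries.X ^ 4 + PowerSeries.X ^ 5 with hD
  have hAc : ((A : PowerSeries k) : LaurentSeries k) = (1 + t) * b := by
    rw [hb, mul_div_cancel₀ _ h1t, hA]
    push_cast [ht]
    rfl
  have hDc : ((D : PowerSeries k) : LaurentSeries k) = (1 + t) ^ 2 * c := by
    rw [hc, hD]
    push_cast [ht]
    linear_combination (-t - t ^ 2 - t ^ 3 - t ^ 4) * h2K
  set w : LaurentSeries k := (1 + t) * y with hw
  have hweq : w ^ 2 + (A : LaurentSeries k) * w + (D : LaurentSeries k) = 0 := by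
    rw [hAc, hDc, hw]
    linear_combination (1 + t) ^ 2 * hy
  have hint : IsIntegral (PowerSeries k) w := by
    refine ⟨Polynomial.X ^ 2 + Polynomial.C A * Polynomial.X + Polynomial.C D, ?_, ?_⟩
    · have hrw' : (X ^ 2 + C A * X + C D : (PowerSeries k)[X]) = C 1 * X ^ 2 + C A * X + C D := by
        simp
      rw [Monic, hrw', leadingCoeff_quadratic one_ne_zero]
    · simp only [eval₂_add, eval₂_mul, eval₂_pow, eval₂_X, eval₂_C]
      exact hweq
  obtain ⟨W, hW⟩ := IsIntegrallyClosed.isIntegral_iff.mp hint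
  have hWeq : W ^ 2 + A * W + D = 0 := by
    apply IsFractionRing.injective (PowerSeries k) (LaurentSeries k)
    rw [map_add, map_add, map_mul, map_pow, hW, map_zero]
    exact hweq
  -- constant coefficient: `W₀ = 1`
  have h0c := congrArg (PowerSeries.constantCoeff (R := k)) hWeq
  simp only [map_add, map_mul, map_pow, hA, hD, PowerSeries.constantCoeff_X, map_one, map_zero]
    at h0c
  set u := PowerSeries.constantCoeff (R := k) W with hu
  have hu1 : u = 1 := by
    have hsq : (u + 1) ^ 2 = 0 := by linear_combination h0c + u * h2k
    have h' := pow_eq_zero_iff (n := 2) (by norm_num) |>.mp hsq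
    linear_combination h' - h2k
  -- coefficient of `t`: contradiction
  have h1c := congrArg (PowerSeries.coeff (R := k) 1) hWeq
  rw [map_add, map_add, map_zero, pow_two, PowerSeries.coeff_mul, PowerSeries.coeff_mul] at h1c
  simp only [Finset.Nat.sum_antidiagonal_eq_sum_range_succ_mk, Finset.sum_range_succ,
    Finset.sum_range_zero, zero_add, hA, hD, map_add, map_one, map_pow,
    PowerSeries.coeff_X_pow, PowerSeries.coeff_one, PowerSeries.coeff_zero_eq_constantCoeff,
    PowerSeries.constantCoeff_X, ← hu, hu1] at h1c
  norm_num [PowerSeries.coeff_X] at h1c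
  rw [← hu, hu1] at h1c
  have : (1 : k) = 0 := by linear_combination h1c - (PowerSeries.coeff (R := k) 1 W) * h2k
  exact one_ne_zero this
end

section
/- Let k be a field of characteristic 2, and let a, b, c, d, w ∈ k((t)) be deformation data: a ≠ 0, c ≠ d, π(X) := X² + aX + b is irreducible in k((t))[X], and (X + w)(X + c)(X + d) = X·π(X) + a in k((t))[X]. In the quotient algebra A := k((t))[X]/(p_t(X)), where p_t(X) := π(X)(X + c)(X + d) and x̄ denotes the image of X, define e₁ := (x̄ + w)(x̄ + c)(x̄ + d)/a, e₂ := c·(x̄ + d)·π(x̄)/(a(c + d)), and e₃ := d·(x̄ + c)·π(x̄)/(a(c + d)). Then e₁, e₂, e₃ are idempotents of A, they are pairwise orthogonal (eᵢeⱼ = 0 for i ≠ j), and e₁ + e₂ + e₃ = 1. -/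
open Polynomial LaurentSeries

theorem stmt6_aux2 {R A : Type*} [Field R] [CommRing A] [Algebra R A]
    (a b c d w : R) (x : A)
    (h2 : (2 : A) = 0)
    (hp : (x ^ 2 + algebraMap R A a * x + algebraMap R A b) * (x + algebraMap R A c)
        * (x + algebraMap R A d) = 0)
    (hw : (x + algebraMap R A w) * (x + algebraMap R A c) * (x + algebraMap R A d)
        = x * (x ^ 2 + algebraMap R A a * x + algebraMap R A b) + algebraMap R A a)
    (hia : algebraMap R A a⁻¹ * algebraMap R A a = 1)
    (hs : algebraMap R A (a * (c + d))⁻¹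
        * (algebraMap R A a * (algebraMap R A c + algebraMap R A d)) = 1) :
    letI φ := algebraMap R A
    letI πx : A := x ^ 2 + φ a * x + φ b
    letI e₁ : A := a⁻¹ • ((x + φ w) * (x + φ c) * (x + φ d))
    letI e₂ : A := (a * (c + d))⁻¹ • (φ c * (x + φ d) * πx)
    letI e₃ : A := (a * (c + d))⁻¹ • (φ d * (x + φ c) * πx)
    IsIdempotentElem e₁ ∧ IsIdempotentElem e₂ ∧ IsIdempotentElem e₃ ∧
      e₁ * e₂ = 0 ∧ e₁ * e₃ = 0 ∧ e₂ * e₃ = 0 ∧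
      e₁ + e₂ + e₃ = 1 := by
  set φ := algebraMap R A with hφ
  set aa := φ a; set bb := φ b; set cc := φ c; set dd := φ d; set ww := φ w
  set ia := φ a⁻¹; set s := φ (a * (c + d))⁻¹
  show IsIdempotentElem (a⁻¹ • ((x + ww) * (x + cc) * (x + dd))) ∧ _
  simp only [Algebra.smul_def, ← hφ]
  refine ⟨?_, ?_, ?_, ?_, ?_, ?_, ?_⟩
  · show (ia * ((x + ww) * (x + cc) * (x + dd))) * (ia * ((x + ww) * (x + cc) * (x + dd))) = ia * ((x + ww) * (x + cc) * (x + dd))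
    linear_combination (x*ww*ia^2 + x^2*ia^2) * hp + (cc*dd*ww*ia^2 + x*dd*ww*ia^2 + x*cc*ww*ia^2 + x*cc*dd*ia^2 + x^2*ww*ia^2 + x^2*dd*ia^2 + x^2*cc*ia^2 + x^3*ia^2) * hw + (cc*dd*ww*ia + x*dd*ww*ia + x*cc*ww*ia + x*cc*dd*ia + x^2*ww*ia + x^2*dd*ia + x^2*cc*ia + x^3*ia) * hia
  · show (s * (cc * (x + dd) * (x ^ 2 + aa * x + bb))) * (s * (cc * (x + dd) * (x ^ 2 + aa * x + bb))) = s * (cc * (x + dd) * (x ^ 2 + aa * x + bb))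
    linear_combination (cc*dd^2*ww*s^2 + cc^2*dd*ww*s^2 + bb*cc*dd*s^2 + x*cc*dd*ww*s^2 + x*cc*dd^2*s^2 + x*cc^2*ww*s^2 + x*cc^2*dd*s^2 + x*aa*cc*dd*s^2 + (2)*x^2*cc*dd*s^2 + x^2*cc^2*s^2) * hp + (bb*cc*dd^2*s^2 + bb*cc^2*dd*s^2 + x*bb*cc*dd*s^2 + x*bb*cc^2*s^2 + x*aa*cc*dd^2*s^2 + x*aa*cc^2*dd*s^2 + x^2*cc*dd^2*s^2 + x^2*cc^2*dd*s^2 + x^2*aa*cc*dd*s^2 + x^2*aa*cc^2*s^2 + x^3*cc*dd*s^2 + x^3*cc^2*s^2) * hw + (bb*cc*dd*s + x*bb*cc*s + x*aa*cc*dd*s + x^2*cc*dd*s + x^2*aa*cc*s + x^3*cc*s) * hs + ((-1)*bb*cc^2*dd^3*ww*s^2 + (-1)*bb*cc^3*dd^2*ww*s^2 + (-1)*x*bb*cc*dd^3*ww*s^2 + (-3)*x*bb*cc^2*dd^2*ww*s^2 + (-1)*x*bb*cc^2*dd^3*s^2 + (-2)*x*bb*cc^3*dd*ww*s^2 + (-1)*x*bb*cc^3*dd^2*s^2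 + x*bb^2*cc^2*dd*s^2 + (-1)*x*aa*cc^2*dd^3*ww*s^2 + (-1)*x*aa*cc^3*dd^2*ww*s^2 + (-1)*x^2*cc^2*dd^3*ww*s^2 + (-1)*x^2*cc^3*dd^2*ww*s^2 + (-2)*x^2*bb*cc*dd^2*ww*s^2 + (-1)*x^2*bb*cc*dd^3*s^2 + (-3)*x^2*bb*cc^2*dd*ww*s^2 + (-3)*x^2*bb*cc^2*dd^2*s^2 + (-1)*x^2*bb*cc^3*ww*s^2 + (-2)*x^2*bb*cc^3*dd*s^2 + x^2*bb^2*cc^2*s^2 + (-1)*x^2*aa*cc*dd^3*ww*s^2 + (-3)*x^2*aa*cc^2*dd^2*ww*s^2 + (-1)*x^2*aa*cc^2*dd^3*s^2 + (-2)*x^2*aa*cc^3*dd*ww*s^2 + (-1)*x^2*aa*cc^3*dd^2*s^2 + (2)*x^2*aa*bb*cc^2*dd*s^2 + (-1)*x^3*cc*dd^3*ww*s^2 + (-3)*x^3*cc^2*dd^2*ww*s^2 + (-1)*x^3*cc^2*dd^3*s^2 + (-2)*x^3*cc^3*dd*ww*s^2 + (-1)*x^3*cc^3*dd^2*s^2 +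 (-1)*x^3*bb*cc*dd*ww*s^2 + (-2)*x^3*bb*cc*dd^2*s^2 + (-1)*x^3*bb*cc^2*ww*s^2 + (-1)*x^3*bb*cc^2*dd*s^2 + (-1)*x^3*bb*cc^3*s^2 + (-2)*x^3*aa*cc*dd^2*ww*s^2 + (-1)*x^3*aa*cc*dd^3*s^2 + (-3)*x^3*aa*cc^2*dd*ww*s^2 + (-3)*x^3*aa*cc^2*dd^2*s^2 + (-1)*x^3*aa*cc^3*ww*s^2 + (-2)*x^3*aa*cc^3*dd*s^2 + (2)*x^3*aa*bb*cc^2*s^2 + x^3*aa^2*cc^2*dd*s^2 + (-2)*x^4*cc*dd^2*ww*s^2 + (-1)*x^4*cc*dd^3*s^2 + (-3)*x^4*cc^2*dd*ww*s^2 + (-3)*x^4*cc^2*dd^2*s^2 + (-1)*x^4*cc^3*ww*s^2 + (-2)*x^4*cc^3*dd*s^2 + (-1)*x^4*bb*cc*dd*s^2 + x^4*bb*cc^2*s^2 + (-1)*x^4*aa*cc*dd*ww*s^2 + (-2)*x^4*aa*cc*dd^2*s^2 + (-1)*x^4*aa*cc^2*ww*s^2 + (-1)*x^4*aa*cc^2*dd*s^2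 + (-1)*x^4*aa*cc^3*s^2 + x^4*aa^2*cc^2*s^2 + (-1)*x^5*cc*dd*ww*s^2 + (-2)*x^5*cc*dd^2*s^2 + (-1)*x^5*cc^2*ww*s^2 + (-2)*x^5*cc^2*dd*s^2 + (-1)*x^5*cc^3*s^2 + (-1)*x^5*aa*cc*dd*s^2 + x^5*aa*cc^2*s^2 + (-1)*x^6*cc*dd*s^2) * h2
  · show (s * (dd * (x + cc) * (x ^ 2 + aa * x + bb))) * (s * (dd * (x + cc) * (x ^ 2 + aa * x + bb))) = s * (dd * (x + cc) * (x ^ 2 + aa * x + bb))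
    linear_combination (cc*dd^2*ww*s^2 + cc^2*dd*ww*s^2 + bb*cc*dd*s^2 + x*dd^2*ww*s^2 + x*cc*dd*ww*s^2 + x*cc*dd^2*s^2 + x*cc^2*dd*s^2 + x*aa*cc*dd*s^2 + x^2*dd^2*s^2 + (2)*x^2*cc*dd*s^2) * hp + (bb*cc*dd^2*s^2 + bb*cc^2*dd*s^2 + x*bb*dd^2*s^2 + x*bb*cc*dd*s^2 + x*aa*cc*dd^2*s^2 + x*aa*cc^2*dd*s^2 + x^2*cc*dd^2*s^2 + x^2*cc^2*dd*s^2 + x^2*aa*dd^2*s^2 + x^2*aa*cc*dd*s^2 + x^3*dd^2*s^2 + x^3*cc*dd*s^2) * hw + (bb*cc*dd*s + x*bb*dd*s + x*aa*cc*dd*s + x^2*cc*dd*s + x^2*aa*dd*s + x^3*dd*s) * hs + ((-1)*bb*cc^2*dd^3*ww*s^2 + (-1)*bb*cc^3*dd^2*ww*s^2 + (-2)*x*bb*cc*dd^3*ww*s^2 + (-3)*x*bb*cc^2*dd^2*ww*s^2 + (-1)*x*bb*cc^2*dd^3*s^2 + (-1)*x*bb*cc^3*dd*ww*s^2 + (-1)*x*bb*cc^3*dd^2*s^2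 + x*bb^2*cc*dd^2*s^2 + (-1)*x*aa*cc^2*dd^3*ww*s^2 + (-1)*x*aa*cc^3*dd^2*ww*s^2 + (-1)*x^2*cc^2*dd^3*ww*s^2 + (-1)*x^2*cc^3*dd^2*ww*s^2 + (-1)*x^2*bb*dd^3*ww*s^2 + (-3)*x^2*bb*cc*dd^2*ww*s^2 + (-2)*x^2*bb*cc*dd^3*s^2 + (-2)*x^2*bb*cc^2*dd*ww*s^2 + (-3)*x^2*bb*cc^2*dd^2*s^2 + (-1)*x^2*bb*cc^3*dd*s^2 + x^2*bb^2*dd^2*s^2 + (-2)*x^2*aa*cc*dd^3*ww*s^2 + (-3)*x^2*aa*cc^2*dd^2*ww*s^2 + (-1)*x^2*aa*cc^2*dd^3*s^2 + (-1)*x^2*aa*cc^3*dd*ww*s^2 + (-1)*x^2*aa*cc^3*dd^2*s^2 + (2)*x^2*aa*bb*cc*dd^2*s^2 + (-2)*x^3*cc*dd^3*ww*s^2 + (-3)*x^3*cc^2*dd^2*ww*s^2 + (-1)*x^3*cc^2*dd^3*s^2 + (-1)*x^3*cc^3*dd*ww*s^2 + (-1)*x^3*cc^3*dd^2*s^2 +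 (-1)*x^3*bb*dd^2*ww*s^2 + (-1)*x^3*bb*dd^3*s^2 + (-1)*x^3*bb*cc*dd*ww*s^2 + (-1)*x^3*bb*cc*dd^2*s^2 + (-2)*x^3*bb*cc^2*dd*s^2 + (-1)*x^3*aa*dd^3*ww*s^2 + (-3)*x^3*aa*cc*dd^2*ww*s^2 + (-2)*x^3*aa*cc*dd^3*s^2 + (-2)*x^3*aa*cc^2*dd*ww*s^2 + (-3)*x^3*aa*cc^2*dd^2*s^2 + (-1)*x^3*aa*cc^3*dd*s^2 + (2)*x^3*aa*bb*dd^2*s^2 + x^3*aa^2*cc*dd^2*s^2 + (-1)*x^4*dd^3*ww*s^2 + (-3)*x^4*cc*dd^2*ww*s^2 + (-2)*x^4*cc*dd^3*s^2 + (-2)*x^4*cc^2*dd*ww*s^2 + (-3)*x^4*cc^2*dd^2*s^2 + (-1)*x^4*cc^3*dd*s^2 + x^4*bb*dd^2*s^2 + (-1)*x^4*bb*cc*dd*s^2 + (-1)*x^4*aa*dd^2*ww*s^2 + (-1)*x^4*aa*dd^3*s^2 + (-1)*x^4*aa*cc*dd*ww*s^2 + (-1)*x^4*aa*cc*dd^2*s^2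 + (-2)*x^4*aa*cc^2*dd*s^2 + x^4*aa^2*dd^2*s^2 + (-1)*x^5*dd^2*ww*s^2 + (-1)*x^5*dd^3*s^2 + (-1)*x^5*cc*dd*ww*s^2 + (-2)*x^5*cc*dd^2*s^2 + (-2)*x^5*cc^2*dd*s^2 + x^5*aa*dd^2*s^2 + (-1)*x^5*aa*cc*dd*s^2 + (-1)*x^6*cc*dd*s^2) * h2
  · show (ia * ((x + ww) * (x + cc) * (x + dd))) * (s * (cc * (x + dd) * (x ^ 2 + aa * x + bb))) = 0
    linear_combination (cc*dd*ww*ia*s + x*cc*ww*ia*s + x*cc*dd*ia*s + x^2*cc*ia*s) * hp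
  · show (ia * ((x + ww) * (x + cc) * (x + dd))) * (s * (dd * (x + cc) * (x ^ 2 + aa * x + bb))) = 0
    linear_combination (cc*dd*ww*ia*s + x*dd*ww*ia*s + x*cc*dd*ia*s + x^2*dd*ia*s) * hp
  · show (s * (cc * (x + dd) * (x ^ 2 + aa * x + bb))) * (s * (dd * (x + cc) * (x ^ 2 + aa * x + bb))) = 0
    linear_combination (bb*cc*dd*s^2 + x*aa*cc*dd*s^2 + x^2*cc*dd*s^2) * hp
  · show ia * ((x + ww) * (x + cc) * (x + dd)) + s * (cc * (x + dd) * (x ^ 2 + aa * x + bb)) + s * (dd * (x + cc) * (x ^ 2 + aa * x + bb)) = 1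
    linear_combination (ia) * hw + ((1) + x*bb*dd*s + x*bb*cc*s + x^2*aa*dd*s + x^2*aa*cc*s + x^3*dd*s + x^3*cc*s) * hia + (x*bb*ia + x^2*aa*ia + x^3*ia) * hs + (bb*cc*dd*s + x*bb*ia + x*bb*dd*s + x*bb*cc*s + x*aa*cc*dd*s + (-1)*x*aa*bb*dd*ia*s + (-1)*x*aa*bb*cc*ia*s + x^2*cc*dd*s + x^2*aa*ia + x^2*aa*dd*s + x^2*aa*cc*s + (-1)*x^2*aa^2*dd*ia*s + (-1)*x^2*aa^2*cc*ia*s + x^3*ia + x^3*dd*s + x^3*cc*s + (-1)*x^3*aa*dd*ia*s + (-1)*x^3*aa*cc*ia*s) * h2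

set_option maxHeartbeats 2000000 in
/-- With deformation data `a, b, c, d, w ∈ k⸨t⸩` (char k = 2),
in `A = k⸨t⸩[X]/(p_t)` the elements `e₁ = (x̄+w)(x̄+c)(x̄+d)/a`,
`e₂ = c(x̄+d)π(x̄)/(a(c+d))`, `e₃ = d(x̄+c)π(x̄)/(a(c+d))` are pairwise
orthogonal idempotents summing to `1`. -/
theorem stmt6 (k : Type*) [Field k] [CharP k 2]
    (a b c d w : LaurentSeries k) (ha : a ≠ 0) (hcd : c ≠ d)
    (hirr : Irreducible (X ^ 2 + C a * X + C b))
    (hfac : (X + C w) * (X + C c) * (X + C d) =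
      X * (X ^ 2 + C a * X + C b) + C a) :
    letI A := AdjoinRoot
      ((X ^ 2 + C a * X + C b) * (X + C c) * (X + C d) : Polynomial (LaurentSeries k))
    letI φ := algebraMap (LaurentSeries k) A
    letI x : A := AdjoinRoot.root _
    letI πx : A := x ^ 2 + φ a * x + φ b
    letI e₁ : A := a⁻¹ • ((x + φ w) * (x + φ c) * (x + φ d))
    letI e₂ : A := (a * (c + d))⁻¹ • (φ c * (x + φ d) * πx)
    letI e₃ : A := (a * (c + d))⁻¹ • (φ d * (x + φ c) * πx)
    IsIdempotentElem e₁ ∧ IsIdempotentElem e₂ ∧ IsIdempotentElem e₃ ∧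
      e₁ * e₂ = 0 ∧ e₁ * e₃ = 0 ∧ e₂ * e₃ = 0 ∧
      e₁ + e₂ + e₃ = 1 := by
  haveI : CharP (LaurentSeries k) 2 :=
    charP_of_injective_ringHom (algebraMap k (LaurentSeries k)).injective 2
  have hcd0 : c + d ≠ 0 := fun h =>
    hcd (by simpa using CharTwo.add_eq_iff_eq_add.mp h)
  have h2A : (2 : AdjoinRoot
      ((X ^ 2 + C a * X + C b) * (X + C c) * (X + C d) : Polynomial (LaurentSeries k))) = 0 := by
    have := congrArg (algebraMap (LaurentSeries k) (AdjoinRoot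
      ((X ^ 2 + C a * X + C b) * (X + C c) * (X + C d) : Polynomial (LaurentSeries k))))
      (CharTwo.two_eq_zero (R := LaurentSeries k))
    rwa [map_ofNat, map_zero] at this
  have hp : ((AdjoinRoot.root _ : AdjoinRoot
        ((X ^ 2 + C a * X + C b) * (X + C c) * (X + C d) : Polynomial (LaurentSeries k))) ^ 2
        + algebraMap _ _ a * AdjoinRoot.root _ + algebraMap _ _ b)
        * (AdjoinRoot.root _ + algebraMap _ _ c) * (AdjoinRoot.root _ + algebraMap _ _ d) = 0 := by
    have h := AdjoinRoot.mk_self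
      (f := ((X ^ 2 + C a * X + C b) * (X + C c) * (X + C d) : Polynomial (LaurentSeries k)))
    simpa [map_mul, map_add, map_pow, AdjoinRoot.algebraMap_eq] using h
  have hw : ((AdjoinRoot.root _ : AdjoinRoot
        ((X ^ 2 + C a * X + C b) * (X + C c) * (X + C d) : Polynomial (LaurentSeries k)))
        + algebraMap _ _ w) * (AdjoinRoot.root _ + algebraMap _ _ c)
        * (AdjoinRoot.root _ + algebraMap _ _ d)
        = AdjoinRoot.root _ * ((AdjoinRoot.root _) ^ 2 + algebraMap _ _ a * AdjoinRoot.root _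
          + algebraMap _ _ b) + algebraMap _ _ a := by
    have h := congrArg (AdjoinRoot.mk
      ((X ^ 2 + C a * X + C b) * (X + C c) * (X + C d) : Polynomial (LaurentSeries k))) hfac
    simpa [map_mul, map_add, map_pow, AdjoinRoot.algebraMap_eq] using h
  have hia : algebraMap (LaurentSeries k) (AdjoinRoot
      ((X ^ 2 + C a * X + C b) * (X + C c) * (X + C d) : Polynomial (LaurentSeries k))) a⁻¹
      * algebraMap _ _ a = 1 := by
    rw [← map_mul, inv_mul_cancel₀ ha, map_one]
  have hs : algebraMap (LaurentSeries k) (AdjoinRoot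
      ((X ^ 2 + C a * X + C b) * (X + C c) * (X + C d) : Polynomial (LaurentSeries k)))
      (a * (c + d))⁻¹ * (algebraMap _ _ a * (algebraMap _ _ c + algebraMap _ _ d)) = 1 := by
    rw [← map_add, ← map_mul, ← map_mul, inv_mul_cancel₀ (mul_ne_zero ha hcd0), map_one]
  exact stmt6_aux2 a b c d w _ h2A hp hw hia hs
end

section
/- Let k be a field of characteristic 2 and let a, b, c, d, w ∈ k((t)) satisfy (X + w)(X + c)(X + d) = X·π(X) + a in k((t))[X], where π(X) := X² + aX + b. Let η_t be the unique k((t))-algebra endomorphism of k((t))[X] with η_t(X) = X·π(X) + X + a. Then η_t(π(X)) = π(X) + X·(X + w)·p_t(X) in k((t))[X], where p_t(X) := π(X)(X + c)(X + d). -/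
open Polynomial LaurentSeries

set_option maxHeartbeats 1000000 in
set_option synthInstance.maxHeartbeats 400000 in
/-- With `(X+w)(X+c)(X+d) = X·π(X) + a` in `k⸨t⸩[X]`
(char k = 2, `π(X) = X² + aX + b`), the substitution `η_t : X ↦ X·π(X)+X+a`
satisfies `η_t(π(X)) = π(X) + X·(X+w)·p_t(X)` where `p_t = π·(X+c)·(X+d)`. -/
theorem stmt9 (k : Type*) [Field k] [CharP k 2]
    (a b c d w : LaurentSeries k)
    (hfac : (X + C w) * (X + C c) * (X + C d) =
      X * (X ^ 2 + C a * X + C b) + C a) :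
    letI π : Polynomial (LaurentSeries k) := X ^ 2 + C a * X + C b
    aeval (X * π + X + C a) π =
      π + X * (X + C w) * (π * (X + C c) * (X + C d)) := by
  have h2k : (2 : LaurentSeries k) = 0 := by
    rw [← map_ofNat (algebraMap k (LaurentSeries k)) 2,
      show (2:k) = 0 from CharTwo.two_eq_zero, map_zero]
  have h2 : (2 : Polynomial (LaurentSeries k)) = 0 := by
    rw [← map_ofNat (C : LaurentSeries k →+* _) 2, h2k, map_zero]
  haveI : IsRightCancelAdd (Polynomial (LaurentSeries k)) :=
    AddCancelMonoid.toIsCancelAdd _ |>.2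
  have key : X * (X + C w) * ((X ^ 2 + C a * X + C b) * (X + C c) * (X + C d)) =
      X * (X ^ 2 + C a * X + C b) * (X * (X ^ 2 + C a * X + C b) + C a) := by
    rw [← hfac]; ring
  simp only [map_add, map_mul, map_pow, aeval_X, aeval_C, Polynomial.algebraMap_eq]
  rw [key]
  linear_combination
    (C a^2 + X^2*(X^2+C a*X+C b) + C a*X*(X^2+C a*X+C b) + C a*X) * h2
end

section
/- Let k be a field of characteristic 2 and let a, b, c, d, w ∈ k((t)) satisfy (X + w)(X + c)(X + d) = X·π(X) + a in k((t))[X], where π(X) := X² + aX + b. Let η_t be the unique k((t))-algebra endomorphism of k((t))[X] with η_t(X) = X·π(X) + X + a, and set p_t(X) := π(X)(X + c)(X + d). Then p_t(X) divides η_t(p_t(X)) in k((t))[X]; consequently η_t maps the ideal (p_t(X)) into itself and induces a k((t))-algebra endomorphism of the quotient k((t))[X]/(p_t(X)). -/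
set_option maxHeartbeats 1000000
set_option synthInstance.maxHeartbeats 400000

open Polynomial LaurentSeries

/-- With `(X+w)(X+c)(X+d) = X·π(X) + a` in `k⸨t⸩[X]`
(char k = 2, `π = X² + aX + b`, `p_t = π(X+c)(X+d)`), the substitution
`η_t : X ↦ X·π(X)+X+a` satisfies `p_t ∣ η_t(p_t)`; consequently `η_t` maps
the ideal `(p_t)` into itself and induces a `k⸨t⸩`-algebra endomorphism of
the quotient `k⸨t⸩[X]/(p_t)`. -/
theorem stmt11 (k : Type*) [Field k] [CharP k 2]
    (a b c d w : LaurentSeries k)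
    (hfac : (X + C w) * (X + C c) * (X + C d) =
      X * (X ^ 2 + C a * X + C b) + C a) :
    letI π : Polynomial (LaurentSeries k) := X ^ 2 + C a * X + C b
    letI p : Polynomial (LaurentSeries k) := π * (X + C c) * (X + C d)
    p ∣ aeval (X * π + X + C a) p ∧
      (∀ q ∈ Ideal.span {p}, aeval (X * π + X + C a) q ∈ Ideal.span {p}) ∧
      ∃ η : AdjoinRoot p →ₐ[LaurentSeries k] AdjoinRoot p,
        ∀ q : Polynomial (LaurentSeries k),
          η (AdjoinRoot.mk p q) = AdjoinRoot.mk p (aeval (X * π + X + C a) q) := by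
  haveI : CharP (LaurentSeries k) 2 :=
    charP_of_injective_algebraMap
      (algebraMap k (LaurentSeries k)).injective 2
  haveI : CharP (Polynomial (LaurentSeries k)) 2 :=
    charP_of_injective_algebraMap
      (algebraMap (LaurentSeries k) (Polynomial (LaurentSeries k))).injective 2
  have h2 : (2 : Polynomial (LaurentSeries k)) = 0 := CharTwo.two_eq_zero
  set π : Polynomial (LaurentSeries k) := X ^ 2 + C a * X + C b with hπ
  set p : Polynomial (LaurentSeries k) := π * (X + C c) * (X + C d) with hp
  set Y : Polynomial (LaurentSeries k) := X * π + X + C a with hYdef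
  have h1 : Y ^ 2 + C a * Y + C b = π * (X ^ 2 * π + C a * X + 1) := by
    have key : Y ^ 2 + C a * Y + C b =
        π * (X ^ 2 * π + C a * X + 1) +
          2 * (C a ^ 2 + X ^ 2 * π + C a * X * π + C a * X) := by
      rw [hYdef, hπ]; ring1
    rw [key, h2, zero_mul, add_zero]
  have h3 : Y + C c = (X + C c) * ((X + C w) * (X + C d) + 1) := by
    have e : Y + C c = (X * π + C a) + (X + C c) := by rw [hYdef, hπ]; ring1
    rw [e, ← hfac]; ring1
  have h4 : Y + C d = (X + C d) * ((X + C w) * (X + C c) + 1) := by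
    have e : Y + C d = (X * π + C a) + (X + C d) := by rw [hYdef, hπ]; ring1
    rw [e, ← hfac]; ring1
  have hev : aeval Y p = (Y ^ 2 + C a * Y + C b) * (Y + C c) * (Y + C d) := by
    rw [hp, hπ]
    simp only [map_mul, map_add, map_pow, aeval_X, aeval_C, Polynomial.algebraMap_eq]
  have hdvd2 : aeval Y p = ((X ^ 2 * π + C a * X + 1) * ((X + C w) * (X + C d) + 1) *
      ((X + C w) * (X + C c) + 1)) * p := by
    rw [hev, h1, h3, h4, hp]
    ring1
  have hdvd : p ∣ aeval Y p := by
    refine ⟨(X ^ 2 * π + C a * X + 1) * ((X + C w) * (X + C d) + 1) *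
      ((X + C w) * (X + C c) + 1), ?_⟩
    rw [hev, h1, h3, h4, hp]
    ring1
  refine ⟨hdvd, ?_, ?_⟩
  · intro q hq
    refine Submodule.span_induction (p := fun x _ => aeval Y x ∈ Ideal.span {p})
      ?_ ?_ ?_ ?_ hq
    · rintro x rfl
      beta_reduce
      rw [hdvd2]
      exact Ideal.mul_mem_left _ _ (Ideal.subset_span (Set.mem_singleton _))
    · beta_reduce
      rw [map_zero]; exact Submodule.zero_mem _
    · intro x y _ _ hx hy
      beta_reduce at hx hy ⊢
      rw [map_add]; exact Submodule.add_mem _ hx hy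
    · intro r x _ hx
      beta_reduce at hx ⊢
      have e : r • x = r * x := smul_eq_mul _ _
      rw [e, map_mul]
      exact Ideal.mul_mem_left _ _ hx
  · have hmk : ∀ g : Polynomial (LaurentSeries k),
        aeval (AdjoinRoot.mk p Y) g = AdjoinRoot.mk p (aeval Y g) := fun g => by
      rw [aeval_def, aeval_def, Polynomial.algebraMap_eq, Polynomial.hom_eval₂,
        AdjoinRoot.algebraMap_eq]
      rfl
    have hroot : aeval (AdjoinRoot.mk p Y) p = 0 := by
      rw [hmk p]
      exact AdjoinRoot.mk_eq_zero.2 hdvd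
    refine ⟨AdjoinRoot.liftAlgHom p (Algebra.ofId _ _) (AdjoinRoot.mk p Y) hroot, fun q => ?_⟩
    refine (AdjoinRoot.liftAlgHom_mk p _ _ hroot q).trans ?_
    exact hmk q
end

section
/- Let k be a field of characteristic 2, and let a, b, c, d, w ∈ k((t)) be deformation data: a ≠ 0, c ≠ d, π(X) := X² + aX + b irreducible in k((t))[X], and (X + w)(X + c)(X + d) = X·π(X) + a in k((t))[X]. Let η̄ denote the k((t))-algebra endomorphism of A := k((t))[X]/(p_t(X)) induced by X ↦ X·π(X) + X + a, where p_t(X) := π(X)(X + c)(X + d), and let e₁ := (x̄ + w)(x̄ + c)(x̄ + d)/a, e₂ := c(x̄ + d)π(x̄)/(a(c + d)), e₃ := d(x̄ + c)π(x̄)/(a(c + d)), with x̄ the image of X. Then η̄(e₁) = e₁, η̄(e₂) = e₂, and η̄(e₃) = e₃. -/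
open Polynomial LaurentSeries

set_option maxHeartbeats 2000000 in
/-- Auxiliary pure ring computation for `stmt12`. -/
theorem stmt12_aux {A : Type*} [CommRing A] (x pa pb pc pd pw : A)
    (htwo : (2 : A) = 0)
    (h1 : (x ^ 2 + pa * x + pb) * (x + pc) * (x + pd) = 0)
    (h2 : (x + pw) * (x + pc) * (x + pd) = x * (x ^ 2 + pa * x + pb) + pa)
    (hv1 : pw + pc + pd = pa)
    (hv2 : pw * pc + pw * pd + pc * pd = pb) :
    (x * (x ^ 2 + pa * x + pb) + x + pa + pw) * (x * (x ^ 2 + pa * x + pb) + x + pa + pc)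
        * (x * (x ^ 2 + pa * x + pb) + x + pa + pd)
      = (x + pw) * (x + pc) * (x + pd) ∧
    pc * (x * (x ^ 2 + pa * x + pb) + x + pa + pd)
        * ((x * (x ^ 2 + pa * x + pb) + x + pa) ^ 2
            + pa * (x * (x ^ 2 + pa * x + pb) + x + pa) + pb)
      = pc * (x + pd) * (x ^ 2 + pa * x + pb) ∧
    pd * (x * (x ^ 2 + pa * x + pb) + x + pa + pc)
        * ((x * (x ^ 2 + pa * x + pb) + x + pa) ^ 2
            + pa * (x * (x ^ 2 + pa * x + pb) + x + pa) + pb)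
      = pd * (x + pc) * (x ^ 2 + pa * x + pb) := by
  refine ⟨?_, ?_, ?_⟩
  · linear_combination (norm := ring1) (pw + x + x*pw^2 + x*pd*pw + x*pc*pw + 2*x*pa*pw + 2*x^2*pw + x^2*pd + x^2*pc + x^2*pb*pw + 2*x^2*pa + x^3 + x^3*pb + x^3*pa*pw + x^4*pw + x^4*pa + x^5) * h1 + (pb + x*pb*pw + x*pb*pd + x*pb*pc + x*pa + 2*x*pa*pb + x^2 + x^2*pb + x^2*pb^2 + x^2*pa*pw + x^2*pa*pd + x^2*pa*pc + 2*x^2*pa^2 + x^3*pw + x^3*pd + x^3*pc + 3*x^3*pa + 2*x^3*pa*pb + x^4 + 2*x^4*pb + x^4*pa^2 + 2*x^5*pa + x^6) * h2 + ((-1)*pb*pc*pd*pw + pa*pb + pa^3 + (-1)*x*pb*pd*pw + (-1)*x*pb*pc*pw + (-1)*x*pb*pc*pd + (-1)*x*pb*pc*pd*pw^2 + (-1)*x*pb*pc*pd^2*pw + (-1)*x*pb*pc^2*pd*pw + x*pb^2 + x*pa*pw + x*pa*pd + x*pa*pc + (-1)*x*pa*pc*pd*pw + x*pa*pb*pw +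 x*pa*pb*pd + x*pa*pb*pc + (-2)*x*pa*pb*pc*pd*pw + 2*x*pa^2 + 3*x*pa^2*pb + (-1)*x^2*pc*pd*pw + (-1)*x^2*pb*pd*pw^2 + (-1)*x^2*pb*pd^2*pw + (-1)*x^2*pb*pc*pw^2 + (-4)*x^2*pb*pc*pd*pw + (-1)*x^2*pb*pc*pd^2 + (-1)*x^2*pb*pc^2*pw + (-1)*x^2*pb*pc^2*pd + x^2*pb^2*pw + x^2*pb^2*pd + x^2*pb^2*pc + (-1)*x^2*pb^2*pc*pd*pw + 2*x^2*pa + (-1)*x^2*pa*pd*pw + (-1)*x^2*pa*pc*pw + (-1)*x^2*pa*pc*pd + (-1)*x^2*pa*pc*pd*pw^2 + (-1)*x^2*pa*pc*pd^2*pw + (-1)*x^2*pa*pc^2*pd*pw + 5*x^2*pa*pb + (-2)*x^2*pa*pb*pd*pw + (-2)*x^2*pa*pb*pc*pw + (-2)*x^2*pa*pb*pc*pd + 3*x^2*pa*pb^2 + x^2*pa^2*pw + x^2*pa^2*pd + x^2*pa^2*pc + (-2)*x^2*pa^2*pc*pd*pw + 3*x^2*pa^3 + (-1)*x^3*pd*pw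 + (-1)*x^3*pc*pw + (-1)*x^3*pc*pd + (-1)*x^3*pc*pd*pw^2 + (-1)*x^3*pc*pd^2*pw + (-1)*x^3*pc^2*pd*pw + 2*x^3*pb + (-1)*x^3*pb*pw^2 + (-3)*x^3*pb*pd*pw + (-1)*x^3*pb*pd^2 + (-3)*x^3*pb*pc*pw + (-3)*x^3*pb*pc*pd + (-1)*x^3*pb*pc^2 + 2*x^3*pb^2 + (-1)*x^3*pb^2*pd*pw + (-1)*x^3*pb^2*pc*pw + (-1)*x^3*pb^2*pc*pd + x^3*pb^3 + x^3*pa*pw + x^3*pa*pd + (-1)*x^3*pa*pd*pw^2 + (-1)*x^3*pa*pd^2*pw + x^3*pa*pc + (-1)*x^3*pa*pc*pw^2 + (-6)*x^3*pa*pc*pd*pw + (-1)*x^3*pa*pc*pd^2 + (-1)*x^3*pa*pc^2*pw + (-1)*x^3*pa*pc^2*pd + (-2)*x^3*pa*pb*pc*pd*pw + 7*x^3*pa^2 + (-2)*x^3*pa^2*pd*pw + (-2)*x^3*pa^2*pc*pw + (-2)*x^3*pa^2*pc*pd + 6*x^3*pa^2*pb + (-1)*x^4*pd*pw^2 + (-1)*x^4*pd^2*pw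 + (-1)*x^4*pc*pw^2 + (-4)*x^4*pc*pd*pw + (-1)*x^4*pc*pd^2 + (-1)*x^4*pc^2*pw + (-1)*x^4*pc^2*pd + (-2)*x^4*pb*pc*pd*pw + (-1)*x^4*pb^2*pw + (-1)*x^4*pb^2*pd + (-1)*x^4*pb^2*pc + 5*x^4*pa + (-1)*x^4*pa*pw^2 + (-5)*x^4*pa*pd*pw + (-1)*x^4*pa*pd^2 + (-5)*x^4*pa*pc*pw + (-5)*x^4*pa*pc*pd + (-1)*x^4*pa*pc^2 + 8*x^4*pa*pb + (-2)*x^4*pa*pb*pd*pw + (-2)*x^4*pa*pb*pc*pw + (-2)*x^4*pa*pb*pc*pd + 3*x^4*pa*pb^2 + (-1)*x^4*pa^2*pw + (-1)*x^4*pa^2*pd + (-1)*x^4*pa^2*pc + (-1)*x^4*pa^2*pc*pd*pw + 3*x^4*pa^3 + x^5 + (-1)*x^5*pw^2 + (-3)*x^5*pd*pw + (-1)*x^5*pd^2 + (-3)*x^5*pc*pw + (-3)*x^5*pc*pd + (-1)*x^5*pc^2 + 3*x^5*pb + (-2)*x^5*pb*pd*pw + (-2)*x^5*pb*pc*pw +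 (-2)*x^5*pb*pc*pd + 2*x^5*pb^2 + (-2)*x^5*pa*pw + (-2)*x^5*pa*pd + (-2)*x^5*pa*pc + (-2)*x^5*pa*pc*pd*pw + (-2)*x^5*pa*pb*pw + (-2)*x^5*pa*pb*pd + (-2)*x^5*pa*pb*pc + 6*x^5*pa^2 + (-1)*x^5*pa^2*pd*pw + (-1)*x^5*pa^2*pc*pw + (-1)*x^5*pa^2*pc*pd + 3*x^5*pa^2*pb + (-1)*x^6*pw + (-1)*x^6*pd + (-1)*x^6*pc + (-1)*x^6*pc*pd*pw + (-2)*x^6*pb*pw + (-2)*x^6*pb*pd + (-2)*x^6*pb*pc + 4*x^6*pa + (-2)*x^6*pa*pd*pw + (-2)*x^6*pa*pc*pw + (-2)*x^6*pa*pc*pd + 4*x^6*pa*pb + (-1)*x^6*pa^2*pw + (-1)*x^6*pa^2*pd + (-1)*x^6*pa^2*pc + x^6*pa^3 + x^7 + (-1)*x^7*pd*pw + (-1)*x^7*pc*pw + (-1)*x^7*pc*pd + x^7*pb + (-2)*x^7*pa*pw + (-2)*x^7*pa*pd + (-2)*x^7*pa*pc + 2*x^7*pa^2 + (-1)*x^8*pw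 + (-1)*x^8*pd + (-1)*x^8*pc + x^8*pa) * htwo + (pa^2 + x*pa*pb + x^2*pa^2 + x^3*pa) * hv1 + (pa + x*pb + x^2*pa + x^3) * hv2
  · linear_combination (norm := ring1) (pc*pw + x*pc + x*pc*pd*pw + x*pa*pc*pw + x^2*pc*pw + x^2*pc*pd + x^2*pb*pc*pw + x^2*pa*pc + x^3*pc + x^3*pb*pc + x^3*pa*pc*pw + x^4*pc*pw + x^4*pa*pc + x^5*pc) * h1 + (pb*pc + x*pb*pc*pd + x*pa*pc + x*pa*pb*pc + x^2*pc + x^2*pb*pc + x^2*pb^2*pc + x^2*pa*pc*pd + x^2*pa^2*pc + x^3*pc*pd + 2*x^3*pa*pc + 2*x^3*pa*pb*pc + x^4*pc + 2*x^4*pb*pc + x^4*pa^2*pc + 2*x^5*pa*pc + x^6*pc) * h2 + ((-1)*pb*pc^2*pd*pw + pa*pb*pc + pa^2*pc*pd + pa^3*pc + (-1)*x*pb*pc*pd*pw + (-1)*x*pb*pc^2*pw + (-1)*x*pb*pc^2*pd + (-1)*x*pb*pc^2*pd^2*pw + x*pb^2*pc + x*pa*pc*pd + (-1)*x*pa*pc^2*pd*pw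 + 2*x*pa*pb*pc*pd + (-1)*x*pa*pb*pc^2*pd*pw + 3*x*pa^2*pc + 3*x*pa^2*pb*pc + (-1)*x^2*pc^2*pd*pw + (-1)*x^2*pb*pc*pw + (-1)*x^2*pb*pc*pd^2*pw + (-1)*x^2*pb*pc^2 + (-2)*x^2*pb*pc^2*pd*pw + (-1)*x^2*pb*pc^2*pd^2 + x^2*pb^2*pc*pd + (-1)*x^2*pb^2*pc^2*pd*pw + 2*x^2*pa*pc + (-1)*x^2*pa*pc*pd*pw + (-1)*x^2*pa*pc^2*pw + (-1)*x^2*pa*pc^2*pd + (-1)*x^2*pa*pc^2*pd^2*pw + 6*x^2*pa*pb*pc + (-1)*x^2*pa*pb*pc*pd*pw + (-1)*x^2*pa*pb*pc^2*pw + (-1)*x^2*pa*pb*pc^2*pd + 3*x^2*pa*pb^2*pc + 2*x^2*pa^2*pc*pd + (-1)*x^2*pa^2*pc^2*pd*pw + 3*x^2*pa^3*pc + (-1)*x^3*pc*pd*pw + (-1)*x^3*pc^2*pw + (-1)*x^3*pc^2*pd + (-1)*x^3*pc^2*pd^2*pw + 2*x^3*pb*pc + (-2)*x^3*pb*pc*pd*pw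 + (-1)*x^3*pb*pc*pd^2 + (-1)*x^3*pb*pc^2*pw + (-2)*x^3*pb*pc^2*pd + 2*x^3*pb^2*pc + (-1)*x^3*pb^2*pc*pd*pw + (-1)*x^3*pb^2*pc^2*pw + (-1)*x^3*pb^2*pc^2*pd + x^3*pb^3*pc + (-1)*x^3*pa*pc*pw + 2*x^3*pa*pc*pd + (-1)*x^3*pa*pc*pd^2*pw + (-1)*x^3*pa*pc^2 + (-3)*x^3*pa*pc^2*pd*pw + (-1)*x^3*pa*pc^2*pd^2 + (-1)*x^3*pa*pb*pc*pw + x^3*pa*pb*pc*pd + (-1)*x^3*pa*pb*pc^2 + (-2)*x^3*pa*pb*pc^2*pd*pw + 8*x^3*pa^2*pc + (-1)*x^3*pa^2*pc*pd*pw + (-1)*x^3*pa^2*pc^2*pw + (-1)*x^3*pa^2*pc^2*pd + 6*x^3*pa^2*pb*pc + (-1)*x^4*pc*pw + (-1)*x^4*pc*pd^2*pw + (-1)*x^4*pc^2 + (-2)*x^4*pc^2*pd*pw + (-1)*x^4*pc^2*pd^2 + (-1)*x^4*pb*pc*pw + (-1)*x^4*pb*pc^2 + (-2)*x^4*pb*pc^2*pd*pw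 + (-1)*x^4*pb^2*pc*pw + (-1)*x^4*pb^2*pc*pd + (-1)*x^4*pb^2*pc^2 + 6*x^4*pa*pc + (-3)*x^4*pa*pc*pd*pw + (-1)*x^4*pa*pc*pd^2 + (-2)*x^4*pa*pc^2*pw + (-3)*x^4*pa*pc^2*pd + 9*x^4*pa*pb*pc + (-2)*x^4*pa*pb*pc*pd*pw + (-2)*x^4*pa*pb*pc^2*pw + (-2)*x^4*pa*pb*pc^2*pd + 3*x^4*pa*pb^2*pc + (-1)*x^4*pa^2*pc*pw + (-1)*x^4*pa^2*pc^2 + (-1)*x^4*pa^2*pc^2*pd*pw + 3*x^4*pa^3*pc + x^5*pc + (-2)*x^5*pc*pd*pw + (-1)*x^5*pc*pd^2 + (-1)*x^5*pc^2*pw + (-2)*x^5*pc^2*pd + 3*x^5*pb*pc + (-2)*x^5*pb*pc*pd*pw + (-2)*x^5*pb*pc^2*pw + (-2)*x^5*pb*pc^2*pd + 2*x^5*pb^2*pc + (-2)*x^5*pa*pc*pw + (-1)*x^5*pa*pc*pd + (-2)*x^5*pa*pc^2 + (-2)*x^5*pa*pc^2*pd*pw + (-2)*x^5*pa*pb*pc*pw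 + (-2)*x^5*pa*pb*pc*pd + (-2)*x^5*pa*pb*pc^2 + 7*x^5*pa^2*pc + (-1)*x^5*pa^2*pc*pd*pw + (-1)*x^5*pa^2*pc^2*pw + (-1)*x^5*pa^2*pc^2*pd + 3*x^5*pa^2*pb*pc + (-1)*x^6*pc*pw + (-1)*x^6*pc*pd + (-1)*x^6*pc^2 + (-1)*x^6*pc^2*pd*pw + (-2)*x^6*pb*pc*pw + (-2)*x^6*pb*pc*pd + (-2)*x^6*pb*pc^2 + 5*x^6*pa*pc + (-2)*x^6*pa*pc*pd*pw + (-2)*x^6*pa*pc^2*pw + (-2)*x^6*pa*pc^2*pd + 4*x^6*pa*pb*pc + (-1)*x^6*pa^2*pc*pw + (-1)*x^6*pa^2*pc*pd + (-1)*x^6*pa^2*pc^2 + x^6*pa^3*pc + x^7*pc + (-1)*x^7*pc*pd*pw + (-1)*x^7*pc^2*pw + (-1)*x^7*pc^2*pd + x^7*pb*pc + (-2)*x^7*pa*pc*pw + (-2)*x^7*pa*pc*pd + (-2)*x^7*pa*pc^2 + 2*x^7*pa^2*pc + (-1)*x^8*pc*pw + (-1)*x^8*pc*pd + (-1)*x^8*pc^2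 + x^8*pa*pc) * htwo
  · linear_combination (norm := ring1) (pd*pw + x*pd + x*pc*pd*pw + x*pa*pd*pw + x^2*pd*pw + x^2*pc*pd + x^2*pb*pd*pw + x^2*pa*pd + x^3*pd + x^3*pb*pd + x^3*pa*pd*pw + x^4*pd*pw + x^4*pa*pd + x^5*pd) * h1 + (pb*pd + x*pb*pc*pd + x*pa*pd + x*pa*pb*pd + x^2*pd + x^2*pb*pd + x^2*pb^2*pd + x^2*pa*pc*pd + x^2*pa^2*pd + x^3*pc*pd + 2*x^3*pa*pd + 2*x^3*pa*pb*pd + x^4*pd + 2*x^4*pb*pd + x^4*pa^2*pd + 2*x^5*pa*pd + x^6*pd) * h2 + ((-1)*pb*pc*pd^2*pw + pa*pb*pd + pa^2*pc*pd + pa^3*pd + (-1)*x*pb*pd^2*pw + (-1)*x*pb*pc*pd*pw + (-1)*x*pb*pc*pd^2 + (-1)*x*pb*pc^2*pd^2*pw + x*pb^2*pd + x*pa*pc*pd + (-1)*x*pa*pc*pd^2*pw + 2*x*pa*pb*pc*pd + (-1)*x*pa*pb*pc*pd^2*pw + 3*x*pa^2*pd + 3*x*pa^2*pb*pd + (-1)*x^2*pc*pd^2*pw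 + (-1)*x^2*pb*pd*pw + (-1)*x^2*pb*pd^2 + (-2)*x^2*pb*pc*pd^2*pw + (-1)*x^2*pb*pc^2*pd*pw + (-1)*x^2*pb*pc^2*pd^2 + x^2*pb^2*pc*pd + (-1)*x^2*pb^2*pc*pd^2*pw + 2*x^2*pa*pd + (-1)*x^2*pa*pd^2*pw + (-1)*x^2*pa*pc*pd*pw + (-1)*x^2*pa*pc*pd^2 + (-1)*x^2*pa*pc^2*pd^2*pw + 6*x^2*pa*pb*pd + (-1)*x^2*pa*pb*pd^2*pw + (-1)*x^2*pa*pb*pc*pd*pw + (-1)*x^2*pa*pb*pc*pd^2 + 3*x^2*pa*pb^2*pd + 2*x^2*pa^2*pc*pd + (-1)*x^2*pa^2*pc*pd^2*pw + 3*x^2*pa^3*pd + (-1)*x^3*pd^2*pw + (-1)*x^3*pc*pd*pw + (-1)*x^3*pc*pd^2 + (-1)*x^3*pc^2*pd^2*pw + 2*x^3*pb*pd + (-1)*x^3*pb*pd^2*pw + (-2)*x^3*pb*pc*pd*pw + (-2)*x^3*pb*pc*pd^2 + (-1)*x^3*pb*pc^2*pd + 2*x^3*pb^2*pd + (-1)*x^3*pb^2*pd^2*pw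 + (-1)*x^3*pb^2*pc*pd*pw + (-1)*x^3*pb^2*pc*pd^2 + x^3*pb^3*pd + (-1)*x^3*pa*pd*pw + (-1)*x^3*pa*pd^2 + 2*x^3*pa*pc*pd + (-3)*x^3*pa*pc*pd^2*pw + (-1)*x^3*pa*pc^2*pd*pw + (-1)*x^3*pa*pc^2*pd^2 + (-1)*x^3*pa*pb*pd*pw + (-1)*x^3*pa*pb*pd^2 + x^3*pa*pb*pc*pd + (-2)*x^3*pa*pb*pc*pd^2*pw + 8*x^3*pa^2*pd + (-1)*x^3*pa^2*pd^2*pw + (-1)*x^3*pa^2*pc*pd*pw + (-1)*x^3*pa^2*pc*pd^2 + 6*x^3*pa^2*pb*pd + (-1)*x^4*pd*pw + (-1)*x^4*pd^2 + (-2)*x^4*pc*pd^2*pw + (-1)*x^4*pc^2*pd*pw + (-1)*x^4*pc^2*pd^2 + (-1)*x^4*pb*pd*pw + (-1)*x^4*pb*pd^2 + (-2)*x^4*pb*pc*pd^2*pw + (-1)*x^4*pb^2*pd*pw + (-1)*x^4*pb^2*pd^2 + (-1)*x^4*pb^2*pc*pd + 6*x^4*pa*pd + (-2)*x^4*pa*pd^2*pw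 + (-3)*x^4*pa*pc*pd*pw + (-3)*x^4*pa*pc*pd^2 + (-1)*x^4*pa*pc^2*pd + 9*x^4*pa*pb*pd + (-2)*x^4*pa*pb*pd^2*pw + (-2)*x^4*pa*pb*pc*pd*pw + (-2)*x^4*pa*pb*pc*pd^2 + 3*x^4*pa*pb^2*pd + (-1)*x^4*pa^2*pd*pw + (-1)*x^4*pa^2*pd^2 + (-1)*x^4*pa^2*pc*pd^2*pw + 3*x^4*pa^3*pd + x^5*pd + (-1)*x^5*pd^2*pw + (-2)*x^5*pc*pd*pw + (-2)*x^5*pc*pd^2 + (-1)*x^5*pc^2*pd + 3*x^5*pb*pd + (-2)*x^5*pb*pd^2*pw + (-2)*x^5*pb*pc*pd*pw + (-2)*x^5*pb*pc*pd^2 + 2*x^5*pb^2*pd + (-2)*x^5*pa*pd*pw + (-2)*x^5*pa*pd^2 + (-1)*x^5*pa*pc*pd + (-2)*x^5*pa*pc*pd^2*pw + (-2)*x^5*pa*pb*pd*pw + (-2)*x^5*pa*pb*pd^2 + (-2)*x^5*pa*pb*pc*pd + 7*x^5*pa^2*pd + (-1)*x^5*pa^2*pd^2*pw + (-1)*x^5*pa^2*pc*pd*pw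 + (-1)*x^5*pa^2*pc*pd^2 + 3*x^5*pa^2*pb*pd + (-1)*x^6*pd*pw + (-1)*x^6*pd^2 + (-1)*x^6*pc*pd + (-1)*x^6*pc*pd^2*pw + (-2)*x^6*pb*pd*pw + (-2)*x^6*pb*pd^2 + (-2)*x^6*pb*pc*pd + 5*x^6*pa*pd + (-2)*x^6*pa*pd^2*pw + (-2)*x^6*pa*pc*pd*pw + (-2)*x^6*pa*pc*pd^2 + 4*x^6*pa*pb*pd + (-1)*x^6*pa^2*pd*pw + (-1)*x^6*pa^2*pd^2 + (-1)*x^6*pa^2*pc*pd + x^6*pa^3*pd + x^7*pd + (-1)*x^7*pd^2*pw + (-1)*x^7*pc*pd*pw + (-1)*x^7*pc*pd^2 + x^7*pb*pd + (-2)*x^7*pa*pd*pw + (-2)*x^7*pa*pd^2 + (-2)*x^7*pa*pc*pd + 2*x^7*pa^2*pd + (-1)*x^8*pd*pw + (-1)*x^8*pd^2 + (-1)*x^8*pc*pd + x^8*pa*pd) * htwo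

set_option maxHeartbeats 2000000 in
set_option synthInstance.maxHeartbeats 1000000 in
/-- With deformation data `a, b, c, d, w ∈ k⸨t⸩` (char k = 2),
the endomorphism `η̄` of `A = k⸨t⸩[X]/(p_t)` induced by `X ↦ X·π(X)+X+a`
fixes the idempotents `e₁, e₂, e₃`. -/
theorem stmt12 (k : Type*) [Field k] [CharP k 2]
    (a b c d w : LaurentSeries k) (ha : a ≠ 0) (hcd : c ≠ d)
    (hirr : Irreducible (X ^ 2 + C a * X + C b))
    (hfac : (X + C w) * (X + C c) * (X + C d) =
      X * (X ^ 2 + C a * X + C b) + C a)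
    (η : AdjoinRoot ((X ^ 2 + C a * X + C b) * (X + C c) * (X + C d) :
          Polynomial (LaurentSeries k)) →ₐ[LaurentSeries k]
        AdjoinRoot ((X ^ 2 + C a * X + C b) * (X + C c) * (X + C d) :
          Polynomial (LaurentSeries k)))
    (hη : η (AdjoinRoot.root _) =
      AdjoinRoot.mk _ (X * (X ^ 2 + C a * X + C b) + X + C a)) :
    letI A := AdjoinRoot
      ((X ^ 2 + C a * X + C b) * (X + C c) * (X + C d) : Polynomial (LaurentSeries k))
    letI φ := algebraMap (LaurentSeries k) A
    letI x : A := AdjoinRoot.root _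
    letI πx : A := x ^ 2 + φ a * x + φ b
    letI e₁ : A := a⁻¹ • ((x + φ w) * (x + φ c) * (x + φ d))
    letI e₂ : A := (a * (c + d))⁻¹ • (φ c * (x + φ d) * πx)
    letI e₃ : A := (a * (c + d))⁻¹ • (φ d * (x + φ c) * πx)
    η e₁ = e₁ ∧ η e₂ = e₂ ∧ η e₃ = e₃ := by
  -- coefficient relations extracted from `hfac`
  have e1' : (X + C w) * (X + C c) * (X + C d)
      = X ^ 3 + C (w + c + d) * X ^ 2 + C (w * c + w * d + c * d) * X + C (w * c * d) := by
    simp only [C_add, C_mul]; ring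
  have e2' : X * (X ^ 2 + C a * X + C b) + C a
      = X ^ 3 + C a * X ^ 2 + C b * X + C a := by ring
  have hfac' := hfac
  rw [e1', e2'] at hfac'
  have hs1 : w + c + d = a := by
    have h := congrArg (fun p : Polynomial (LaurentSeries k) => p.coeff 2) hfac'
    simpa [add_mul, coeff_X_pow, coeff_C_mul_X_pow, coeff_C_mul_X, coeff_C] using h
  have hs2 : w * c + w * d + c * d = b := by
    have h := congrArg (fun p : Polynomial (LaurentSeries k) => p.coeff 1) hfac'
    simpa [add_mul, coeff_X_pow, coeff_C_mul_X_pow, coeff_C_mul_X, coeff_C] using h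
  -- char two
  have h2k : (2 : LaurentSeries k) = 0 := by
    rw [← map_ofNat (algebraMap k (LaurentSeries k)) 2, CharTwo.two_eq_zero, map_zero]
  have htwo : (2 : AdjoinRoot
      ((X ^ 2 + C a * X + C b) * (X + C c) * (X + C d) : Polynomial (LaurentSeries k))) = 0 := by
    rw [← map_ofNat (algebraMap (LaurentSeries k) (AdjoinRoot
      ((X ^ 2 + C a * X + C b) * (X + C c) * (X + C d) : Polynomial (LaurentSeries k)))) 2,
      h2k, map_zero]
  -- relations in the quotient ring
  have h1 := AdjoinRoot.mk_self
    (f := ((X ^ 2 + C a * X + C b) * (X + C c) * (X + C d) : Polynomial (LaurentSeries k)))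
  have h2 := congrArg (AdjoinRoot.mk
    ((X ^ 2 + C a * X + C b) * (X + C c) * (X + C d) : Polynomial (LaurentSeries k))) hfac
  simp only [map_mul, map_add, map_pow, AdjoinRoot.mk_X, AdjoinRoot.mk_C] at h1 h2
  have hv1 := congrArg (algebraMap (LaurentSeries k) (AdjoinRoot
    ((X ^ 2 + C a * X + C b) * (X + C c) * (X + C d) : Polynomial (LaurentSeries k)))) hs1
  have hv2 := congrArg (algebraMap (LaurentSeries k) (AdjoinRoot
    ((X ^ 2 + C a * X + C b) * (X + C c) * (X + C d) : Polynomial (LaurentSeries k)))) hs2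
  simp only [map_add, map_mul] at hv1 hv2
  -- image of the root under η
  have hy : η (AdjoinRoot.root _)
      = AdjoinRoot.root _ * ((AdjoinRoot.root _) ^ 2
          + algebraMap (LaurentSeries k) _ a * AdjoinRoot.root _
          + algebraMap (LaurentSeries k) _ b)
        + AdjoinRoot.root _ + algebraMap (LaurentSeries k) _ a := by
    rw [hη]
    simp only [map_mul, map_add, map_pow, AdjoinRoot.mk_X, AdjoinRoot.mk_C]
    rfl
  have key := stmt12_aux (AdjoinRoot.root
      ((X ^ 2 + C a * X + C b) * (X + C c) * (X + C d) : Polynomial (LaurentSeries k)))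
    (algebraMap (LaurentSeries k) _ a) (algebraMap (LaurentSeries k) _ b)
    (algebraMap (LaurentSeries k) _ c) (algebraMap (LaurentSeries k) _ d)
    (algebraMap (LaurentSeries k) _ w) htwo h1 h2 hv1 hv2
  refine ⟨?_, ?_, ?_⟩
  · rw [map_smul]
    congr 1
    simp only [map_mul, map_add, AlgHom.commutes, hy]
    exact key.1
  · rw [map_smul]
    congr 1
    simp only [map_mul, map_add, map_pow, AlgHom.commutes, hy]
    exact key.2.1
  · rw [map_smul]
    congr 1
    simp only [map_mul, map_add, map_pow, AlgHom.commutes, hy]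
    exact key.2.2
end

section
/- Let k be a field of characteristic 2, and let a, b, c, d, w ∈ k((t)) be deformation data: a ≠ 0, c ≠ d, π(X) := X² + aX + b irreducible in k((t))[X], and (X + w)(X + c)(X + d) = X·π(X) + a in k((t))[X]. Let η̄ be the k((t))-algebra endomorphism of A := k((t))[X]/(p_t(X)) induced by X ↦ X·π(X) + X + a, where p_t(X) := π(X)(X + c)(X + d), let x̄ be the image of X, and let e₁ := (x̄ + w)(x̄ + c)(x̄ + d)/a. Then η̄(x̄)·e₁ = (x̄ + a)·e₁. -/
open Polynomial LaurentSeries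

lemma stmt13_aux {R A : Type*} [Field R] [CommRing A] [Algebra R A]
    (a b c d w : R) (x y : A)
    (h0 : (x ^ 2 + algebraMap R A a * x + algebraMap R A b) * (x + algebraMap R A c)
        * (x + algebraMap R A d) = 0)
    (hy : y = x * (x ^ 2 + algebraMap R A a * x + algebraMap R A b) + x + algebraMap R A a) :
    y * (a⁻¹ • ((x + algebraMap R A w) * (x + algebraMap R A c) * (x + algebraMap R A d)))
      = (x + algebraMap R A a) *
        (a⁻¹ • ((x + algebraMap R A w) * (x + algebraMap R A c) * (x + algebraMap R A d))) := by
  rw [hy, mul_smul_comm, mul_smul_comm]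
  congr 1
  linear_combination (x * (x + algebraMap R A w)) * h0

/-- With deformation data `a, b, c, d, w ∈ k⸨t⸩` (char k = 2),
the endomorphism `η̄` of `A = k⸨t⸩[X]/(p_t)` induced by `X ↦ X·π(X)+X+a`
satisfies `η̄(x̄)·e₁ = (x̄ + a)·e₁`. -/
theorem stmt13 (k : Type*) [Field k] [CharP k 2]
    (a b c d w : LaurentSeries k) (ha : a ≠ 0) (hcd : c ≠ d)
    (hirr : Irreducible (X ^ 2 + C a * X + C b))
    (hfac : (X + C w) * (X + C c) * (X + C d) =
      X * (X ^ 2 + C a * X + C b) + C a)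
    (η : AdjoinRoot ((X ^ 2 + C a * X + C b) * (X + C c) * (X + C d) :
          Polynomial (LaurentSeries k)) →ₐ[LaurentSeries k]
        AdjoinRoot ((X ^ 2 + C a * X + C b) * (X + C c) * (X + C d) :
          Polynomial (LaurentSeries k)))
    (hη : η (AdjoinRoot.root _) =
      AdjoinRoot.mk _ (X * (X ^ 2 + C a * X + C b) + X + C a)) :
    letI A := AdjoinRoot
      ((X ^ 2 + C a * X + C b) * (X + C c) * (X + C d) : Polynomial (LaurentSeries k))
    letI φ := algebraMap (LaurentSeries k) A
    letI x : A := AdjoinRoot.root _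
    letI e₁ : A := a⁻¹ • ((x + φ w) * (x + φ c) * (x + φ d))
    η x * e₁ = (x + φ a) * e₁ := by
  refine stmt13_aux a b c d w _ _ ?_ ?_
  · have h := AdjoinRoot.mk_self
      (f := ((X ^ 2 + C a * X + C b) * (X + C c) * (X + C d) : Polynomial (LaurentSeries k)))
    simpa [map_add, map_mul, map_pow, ← AdjoinRoot.algebraMap_eq] using h
  · rw [hη]
    simp [map_add, map_mul, map_pow, ← AdjoinRoot.algebraMap_eq]
end

section
/- Let k be a field of characteristic 2, and let a, b, c, d, w ∈ k((t)) be deformation data: a ≠ 0, c ≠ d, π(X) := X² + aX + b irreducible in k((t))[X], and (X + w)(X + c)(X + d) = X·π(X) + a in k((t))[X]. Let η̄ be the k((t))-algebra endomorphism of A := k((t))[X]/(p_t(X)) induced by X ↦ X·π(X) + X + a, where p_t(X) := π(X)(X + c)(X + d), let x̄ be the image of X, and let e₂ := c(x̄ + d)π(x̄)/(a(c + d)), e₃ := d(x̄ + c)π(x̄)/(a(c + d)). Then η̄(x̄)·e₂ = x̄·e₂ and η̄(x̄)·e₃ = x̄·e₃; that is, η̄ fixes the components A·e₂ and A·e₃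 pointwise. -/
open Polynomial LaurentSeries

set_option maxHeartbeats 2000000

/-- With deformation data `a, b, c, d, w ∈ k⸨t⸩` (char k = 2),
the endomorphism `η̄` of `A = k⸨t⸩[X]/(p_t)` induced by `X ↦ X·π(X)+X+a`
satisfies `η̄(x̄)·e₂ = x̄·e₂` and `η̄(x̄)·e₃ = x̄·e₃`; that is, `η̄` fixes the
components `A·e₂` and `A·e₃` pointwise. -/
theorem stmt14 (k : Type*) [Field k] [CharP k 2]
    (a b c d w : LaurentSeries k) (ha : a ≠ 0) (hcd : c ≠ d)
    (hirr : Irreducible (X ^ 2 + C a * X + C b))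
    (hfac : (X + C w) * (X + C c) * (X + C d) =
      X * (X ^ 2 + C a * X + C b) + C a)
    (η : AdjoinRoot ((X ^ 2 + C a * X + C b) * (X + C c) * (X + C d) :
          Polynomial (LaurentSeries k)) →ₐ[LaurentSeries k]
        AdjoinRoot ((X ^ 2 + C a * X + C b) * (X + C c) * (X + C d) :
          Polynomial (LaurentSeries k)))
    (hη : η (AdjoinRoot.root _) =
      AdjoinRoot.mk _ (X * (X ^ 2 + C a * X + C b) + X + C a)) :
    letI A := AdjoinRoot
      ((X ^ 2 + C a * X + C b) * (X + C c) * (X + C d) : Polynomial (LaurentSeries k))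
    letI φ := algebraMap (LaurentSeries k) A
    letI x : A := AdjoinRoot.root _
    letI πx : A := x ^ 2 + φ a * x + φ b
    letI e₂ : A := (a * (c + d))⁻¹ • (φ c * (x + φ d) * πx)
    letI e₃ : A := (a * (c + d))⁻¹ • (φ d * (x + φ c) * πx)
    η x * e₂ = x * e₂ ∧ η x * e₃ = x * e₃ ∧
      (∀ y : A, η (y * e₂) = y * e₂) ∧ (∀ y : A, η (y * e₃) = y * e₃) := by

  set φ := algebraMap (LaurentSeries k) (AdjoinRoot ((X ^ 2 + C a * X + C b) * (X + C c) * (X + C d) : Polynomial (LaurentSeries k))) with hφ_def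
  set x := AdjoinRoot.root ((X ^ 2 + C a * X + C b) * (X + C c) * (X + C d) : Polynomial (LaurentSeries k)) with hx_def
  set πx := x ^ 2 + φ a * x + φ b with hπ_def
  set e₂ := (a * (c + d))⁻¹ • (φ c * (x + φ d) * πx) with he₂_def
  set e₃ := (a * (c + d))⁻¹ • (φ d * (x + φ c) * πx) with he₃_def
  -- basic facts
  have h0 : πx * (x + φ c) * (x + φ d) = 0 := by
    have := AdjoinRoot.mk_self (f :=
      ((X ^ 2 + C a * X + C b) * (X + C c) * (X + C d) : Polynomial (LaurentSeries k)))
    simp only [map_mul, map_add, map_pow, AdjoinRoot.mk_X, AdjoinRoot.mk_C,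
      ← AdjoinRoot.algebraMap_eq, ← hφ_def, ← hx_def] at this
    rw [hπ_def]; exact this
  have h2A : (2 : AdjoinRoot ((X ^ 2 + C a * X + C b) * (X + C c) * (X + C d) : Polynomial (LaurentSeries k))) = 0 := by
    have h2k : (2 : k) = 0 := by
      have h := CharP.cast_eq_zero k 2
      norm_num at h ⊢
      exact h
    have h2L : (2 : LaurentSeries k) = 0 := by
      rw [← map_ofNat (algebraMap k (LaurentSeries k)) 2, h2k, map_zero]
    rw [← map_ofNat φ 2, h2L, map_zero]
  set z : AdjoinRoot ((X ^ 2 + C a * X + C b) * (X + C c) * (X + C d) : Polynomial (LaurentSeries k)) := x * πx + φ a with hz_def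
  have hηx : η x = x + z := by
    rw [hη]
    simp only [map_mul, map_add, map_pow, AdjoinRoot.mk_X, AdjoinRoot.mk_C,
      ← AdjoinRoot.algebraMap_eq, ← hφ_def, ← hx_def]
    rw [hz_def, hπ_def]; ring
  have hzfac : z = (x + φ w) * (x + φ c) * (x + φ d) := by
    have h := congrArg (AdjoinRoot.mk
      ((X ^ 2 + C a * X + C b) * (X + C c) * (X + C d) : Polynomial (LaurentSeries k))) hfac
    simp only [map_mul, map_add, map_pow, AdjoinRoot.mk_X, AdjoinRoot.mk_C,
      ← AdjoinRoot.algebraMap_eq, ← hφ_def, ← hx_def] at h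
    rw [hz_def, hπ_def]
    linear_combination -h
  have hz0 : z * πx = 0 := by
    rw [hzfac]; linear_combination (x + φ w) * h0
  have hz2 : z * (z + φ a) = 0 := by
    linear_combination x * hz0 + (φ a * z) * h2A
  set s : AdjoinRoot ((X ^ 2 + C a * X + C b) * (X + C c) * (X + C d) : Polynomial (LaurentSeries k)) := φ ((a * (c + d))⁻¹) with hs_def
  have he2 : e₂ = s * (φ c * (x + φ d) * πx) := by
    rw [he₂_def, hs_def, hφ_def]
    exact Algebra.smul_def (R := LaurentSeries k) (A := AdjoinRoot ((X ^ 2 + C a * X + C b) * (X + C c) * (X + C d) : Polynomial (LaurentSeries k))) _ _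
  have he3 : e₃ = s * (φ d * (x + φ c) * πx) := by
    rw [he₃_def, hs_def, hφ_def]
    exact Algebra.smul_def (R := LaurentSeries k) (A := AdjoinRoot ((X ^ 2 + C a * X + C b) * (X + C c) * (X + C d) : Polynomial (LaurentSeries k))) _ _
  have hze2 : z * e₂ = 0 := by
    rw [he2, hzfac]
    linear_combination (s * φ c * (x + φ d) * (x + φ w)) * h0
  have hze3 : z * e₃ = 0 := by
    rw [he3, hzfac]
    linear_combination (s * φ d * (x + φ c) * (x + φ w)) * h0
  have key : ∀ y : AdjoinRoot ((X ^ 2 + C a * X + C b) * (X + C c) * (X + C d) : Polynomial (LaurentSeries k)), η y * e₂ = y * e₂ ∧ η y * e₃ = y * e₃ := by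
    intro y
    obtain ⟨q, rfl⟩ := AdjoinRoot.mk_surjective y
    have hy : AdjoinRoot.mk _ q = (q.map φ).eval x := by
      rw [← AdjoinRoot.aeval_eq, aeval_def, eval_map]
    have hηy : η (AdjoinRoot.mk _ q) = (q.map φ).eval (x + z) := by
      rw [← AdjoinRoot.aeval_eq, ← Polynomial.aeval_algHom_apply, hηx, aeval_def, eval_map]
    obtain ⟨r, hr⟩ : z ∣ (q.map φ).eval (x + z) - (q.map φ).eval x := by
      have := Polynomial.sub_dvd_eval_sub (x + z) x (q.map φ)
      simpa using this
    constructor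
    · rw [hηy, hy]; linear_combination e₂ * hr + r * hze2
    · rw [hηy, hy]; linear_combination e₃ * hr + r * hze3
  have hφcomm : ∀ r : LaurentSeries k, η (φ r) = φ r := fun r => by
    rw [hφ_def]; exact η.commutes r
  have hηe2 : η e₂ = e₂ := by
    have h1 : η e₂ = s * (φ c * ((x + z) + φ d) *
        ((x + z) ^ 2 + φ a * (x + z) + φ b)) := by
      rw [he2, hπ_def, hs_def]
      simp only [map_mul, map_add, map_pow, hηx, hφcomm]
    rw [h1, he2]
    linear_combination (-(s * φ c * (x + φ d + z))) * hπ_def +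
      (s * φ c * (x + φ d + z)) * hz2 + (s * φ c) * hz0 +
      (s * φ c * (x + φ d + z) * x * z) * h2A
  have hηe3 : η e₃ = e₃ := by
    have h1 : η e₃ = s * (φ d * ((x + z) + φ c) *
        ((x + z) ^ 2 + φ a * (x + z) + φ b)) := by
      rw [he3, hπ_def, hs_def]
      simp only [map_mul, map_add, map_pow, hηx, hφcomm]
    rw [h1, he3]
    linear_combination (-(s * φ d * (x + φ c + z))) * hπ_def +
      (s * φ d * (x + φ c + z)) * hz2 + (s * φ d) * hz0 +
      (s * φ d * (x + φ c + z) * x * z) * h2A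
  refine ⟨(key x).1, (key x).2, fun y => ?_, fun y => ?_⟩
  · rw [map_mul, hηe2, (key y).1]
  · rw [map_mul, hηe3, (key y).2]
end

section
/- Let k be a field of characteristic 2, and let a, b, c, d, w ∈ k((t)) be deformation data: a ≠ 0, c ≠ d, π(X) := X² + aX + b irreducible in k((t))[X], and (X + w)(X + c)(X + d) = X·π(X) + a in k((t))[X]. Let η̄ be the k((t))-algebra endomorphism of A := k((t))[X]/(p_t(X)) induced by X ↦ X·π(X) + X + a, where p_t(X) := π(X)(X + c)(X + d). Then η̄ ∘ η̄ is the identity map of A (so η̄ is a k((t))-algebra automorphism of A), and η̄ is not the identity; hence η̄ has order exactly 2. -/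
open Polynomial LaurentSeries

set_option maxHeartbeats 2000000

theorem aux (F : Type*) [Field F] (htwo : (2:F) = 0) (a b c d w : F)
    (hfac : (X + C w) * (X + C c) * (X + C d) = X * (X ^ 2 + C a * X + C b) + C a)
    (η : AdjoinRoot ((X ^ 2 + C a * X + C b) * (X + C c) * (X + C d) : F[X]) →ₐ[F]
        AdjoinRoot ((X ^ 2 + C a * X + C b) * (X + C c) * (X + C d) : F[X]))
    (hη : η (AdjoinRoot.root _) = AdjoinRoot.mk _ (X * (X ^ 2 + C a * X + C b) + X + C a)) :
    η.comp η = AlgHom.id F (AdjoinRoot ((X ^ 2 + C a * X + C b) * (X + C c) * (X + C d) : F[X])) ∧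
      η ≠ AlgHom.id F (AdjoinRoot ((X ^ 2 + C a * X + C b) * (X + C c) * (X + C d) : F[X])) := by
  have hfac' : (C (w*c*d) + C (w*c+w*d+c*d) * X + C (w+c+d) * X^2 + X^3 : F[X])
      = C a + C b * X + C a * X^2 + X^3 := by
    simp only [C_add, C_mul]; linear_combination hfac
  have e2 : w + c + d = a := by
    have := congrArg (fun q => Polynomial.coeff q 2) hfac'
    simpa [add_mul, coeff_add, coeff_C_mul, coeff_X, coeff_C, coeff_X_pow] using this
  have e1 : w*c + w*d + c*d = b := by
    have := congrArg (fun q => Polynomial.coeff q 1) hfac'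
    simpa [add_mul, coeff_add, coeff_C_mul, coeff_X, coeff_C, coeff_X_pow] using this
  have e0 : w*c*d = a := by
    have := congrArg (fun q => Polynomial.coeff q 0) hfac'
    simpa [add_mul, coeff_add, coeff_C_mul, coeff_X, coeff_C, coeff_X_pow] using this
  set p : F[X] := (X ^ 2 + C a * X + C b) * (X + C c) * (X + C d) with hpdef
  set f : F[X] := X * (X ^ 2 + C a * X + C b) + X + C a with hfdef
  constructor
  · refine AdjoinRoot.algHom_ext ?_
    rw [AlgHom.comp_apply, AlgHom.id_apply, hη, ← AdjoinRoot.aeval_eq,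
      ← Polynomial.aeval_algHom_apply, hη, ← AdjoinRoot.aeval_eq]
    set x := AdjoinRoot.root p with hxdef
    have hp0 : aeval x p = 0 := by rw [AdjoinRoot.aeval_eq]; exact AdjoinRoot.mk_self
    have hg1 := congrArg (aeval x) hfac
    have hg2 := congrArg (aeval (aeval x f)) hfac
    have E2 := congrArg (algebraMap F (AdjoinRoot p)) e2
    have E1 := congrArg (algebraMap F (AdjoinRoot p)) e1
    have E0 := congrArg (algebraMap F (AdjoinRoot p)) e0
    have htwoQ : (2 : AdjoinRoot p) = 0 := by
      have h : (2 : AdjoinRoot p) = algebraMap F (AdjoinRoot p) 2 := (map_ofNat _ 2).symm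
      rw [h, htwo, map_zero]
    simp only [hpdef, hfdef, map_add, map_mul, map_pow, aeval_X, aeval_C] at hp0 hg1 hg2 E2 E1 E0 ⊢
    set A := algebraMap F (AdjoinRoot p) a with hA
    set B := algebraMap F (AdjoinRoot p) b with hB
    set CC := algebraMap F (AdjoinRoot p) c with hC
    set D := algebraMap F (AdjoinRoot p) d with hD
    set W := algebraMap F (AdjoinRoot p) w with hW
    clear_value A B CC D W
    clear_value x
    linear_combination (x^3*A^2*W + x^3*A*W^2 + x^3*CC*D*W + x^3*CC*W^2 + x^3*D*W^2 + x^2*A^2*CC*W + x^2*A^2*D*W + x^2*A*CC*W^2 + x^2*A*D*W^2 + x^2*CC^2*D*W + x^2*CC^2*W^2 + x^2*CC*D^2*W + x^2*CC*D*W^2 + x^2*D^2*W^2 + x*A^2*CC*D*W + x*A*CC*D*W^2 + x*CC^2*D^2*W + CC^2*D^2*W^2 + x^3*A*B + x^3*B*W + x^2*A*B*CC + x^2*A*B*D + x^2*A*B*W + x^2*B*CC*W + x^2*B*D*W + x^2*B*W^2 + x*A*B*CC*D + x*A*B*CC*W + x*A*B*D*W + x*B*CC*D*W + x*B*CC*W^2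 + x*B*D*W^2 + A*B*CC*D*W + B*CC*D*W^2 + x^2*B^2 + x^2*CC*D + x^2*CC*W + x^2*D*W + x*B^2*CC + x*B^2*D + x*CC^2*D + x*CC^2*W + x*CC*D^2 + x*D^2*W + B^2*CC*D + CC^2*D^2 + CC^2*D*W + CC*D^2*W)*E2 + (x^3*CC*W + x^3*D*W + x^2*CC^2*W + x^2*CC*D*W + x^2*D^2*W + CC^2*D^2*W + x^3*B + x^2*B*CC + x^2*B*D + x*B*CC*D + x^2*CC + x^2*D + x*CC^2 + x*D^2 + CC^2*D + CC*D^2)*E1 + (x^2*CC*D + x*CC^2*D + x*CC*D^2 + CC^2*D^2 + x^2 + x*CC + x*D + CC*D)*E0 + (x^5 + x^4*CC + x^4*D + x^3*CC*D + x^3*W^2 + x^2*CC*W^2 + x^2*D*W^2 + x*CC*D*W^2 + x^3 + x^2*W + x*A*W + x*CC*D + x*W^2 + A^2*W + A*CC*W + A*D*W + CC*D*W + CC*W^2 + D*W^2 + W^3 + x*B + A*B + B*CC + B*D + B*W + x + CC + D)*hp0 + (x^5*A + x^5*CC + x^5*D + x^5*W + x^4*A^2 + x^4*A*CC + x^4*A*D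 + x^4*A*W + x^4*CC*D + x^4*CC*W + x^4*D*W + x^3*A*CC*D + x^3*A*CC*W + x^3*A*D*W + x^3*CC*D*W + x^2*A*CC*D*W + x^4*B + x^3*B*CC + x^3*B*D + x^3*B*W + x^2*B*CC*D + x^2*B*CC*W + x^2*B*D*W + x*B*CC*D*W + x^3*W + x^2*B^2 + x^2*CC*D + x^2*W^2 + x*A*CC*D + x*A*CC*W + x*A*D*W + x*CC*W^2 + x*D*W^2 + A*CC*D*W + CC*D*W^2 + x^2*B + x*B*CC + x*B*D + x*B*W + x*A + x*CC + x*D + A^2 + A*CC + A*D + A*W + CC*W + D*W + 1)*hg1 + hg2 + (x^8*A + -1*x^8*CC + -1*x^8*D + 2*x^7*A^2 + -1*x^7*A*CC + -1*x^7*A*D + -1*x^7*CC^2 + -3*x^7*CC*D + -1*x^7*CC*W + -1*x^7*D^2 + -1*x^7*D*W + -1*x^7*W^2 + x^6*A^3 + -1*x^6*A*CC^2 + -3*x^6*A*CC*D + -1*x^6*A*CC*W + -1*x^6*A*D^2 + -1*x^6*A*D*W + -1*x^6*A*W^2 + -2*x^6*CC^2*D + -1*x^6*CC^2*W + -2*x^6*CC*D^2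 + -3*x^6*CC*D*W + -2*x^6*CC*W^2 + -1*x^6*D^2*W + -2*x^6*D*W^2 + -2*x^5*A*CC^2*D + -1*x^5*A*CC^2*W + -2*x^5*A*CC*D^2 + -3*x^5*A*CC*D*W + -2*x^5*A*CC*W^2 + -1*x^5*A*D^2*W + -2*x^5*A*D*W^2 + -1*x^5*CC^2*D^2 + -2*x^5*CC^2*D*W + -1*x^5*CC^2*W^2 + -2*x^5*CC*D^2*W + -4*x^5*CC*D*W^2 + -1*x^5*D^2*W^2 + -1*x^4*A*CC^2*D^2 + -2*x^4*A*CC^2*D*W + -1*x^4*A*CC^2*W^2 + -2*x^4*A*CC*D^2*W + -4*x^4*A*CC*D*W^2 + -1*x^4*A*D^2*W^2 + -1*x^4*CC^2*D^2*W + -2*x^4*CC^2*D*W^2 + -2*x^4*CC*D^2*W^2 + -1*x^3*A*CC^2*D^2*W + -2*x^3*A*CC^2*D*W^2 + -2*x^3*A*CC*D^2*W^2 + -1*x^3*CC^2*D^2*W^2 + -1*x^2*A*CC^2*D^2*W^2 + x^7*B + 4*x^6*A*B + -1*x^6*B*CC + -1*x^6*B*D + 2*x^5*A^2*B + x^5*A*B*CC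 + x^5*A*B*D + x^5*A*B*W + -1*x^5*B*CC^2 + -3*x^5*B*CC*D + -1*x^5*B*CC*W + -1*x^5*B*D^2 + -1*x^5*B*D*W + -1*x^5*B*W^2 + x^4*A*B*CC*D + x^4*A*B*CC*W + x^4*A*B*D*W + -2*x^4*B*CC^2*D + -1*x^4*B*CC^2*W + -2*x^4*B*CC*D^2 + -3*x^4*B*CC*D*W + -2*x^4*B*CC*W^2 + -1*x^4*B*D^2*W + -2*x^4*B*D*W^2 + x^3*A*B*CC*D*W + -1*x^3*B*CC^2*D^2 + -2*x^3*B*CC^2*D*W + -1*x^3*B*CC^2*W^2 + -2*x^3*B*CC*D^2*W + -4*x^3*B*CC*D*W^2 + -1*x^3*B*D^2*W^2 + -1*x^2*B*CC^2*D^2*W + -2*x^2*B*CC^2*D*W^2 + -2*x^2*B*CC*D^2*W^2 + -1*x*B*CC^2*D^2*W^2 + x^7 + 5*x^6*A + -1*x^6*CC + -1*x^6*D + -1*x^6*W + 7*x^5*A^2 + -1*x^5*A*CC + -1*x^5*A*D + -1*x^5*A*W + 2*x^5*B^2 + -1*x^5*CC*D + -1*x^5*CC*W + -1*x^5*D*W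 + -1*x^5*W^2 + 3*x^4*A^3 + -1*x^4*A^2*W + 2*x^4*A*B^2 + -1*x^4*A*CC*W + -1*x^4*A*D*W + -1*x^4*CC^2*D + -1*x^4*CC*D^2 + -2*x^4*CC*D*W + -2*x^4*CC*W^2 + -2*x^4*D*W^2 + -1*x^4*W^3 + x^3*A^2*CC*D + -1*x^3*A^2*CC*W + -1*x^3*A^2*D*W + -1*x^3*A*CC^2*D + -1*x^3*A*CC^2*W + -1*x^3*A*CC*D^2 + -3*x^3*A*CC*D*W + -1*x^3*A*CC*W^2 + -1*x^3*A*D^2*W + -1*x^3*A*D*W^2 + -1*x^3*A*W^3 + -1*x^3*CC^2*D^2 + -2*x^3*CC^2*D*W + -2*x^3*CC^2*W^2 + -2*x^3*CC*D^2*W + -6*x^3*CC*D*W^2 + -2*x^3*CC*W^3 + -2*x^3*D^2*W^2 + -2*x^3*D*W^3 + -1*x^2*A^2*CC^2*W + -2*x^2*A^2*CC*D*W + -1*x^2*A^2*D^2*W + -1*x^2*A*CC^2*D^2 + -2*x^2*A*CC^2*D*W + -1*x^2*A*CC^2*W^2 + -2*x^2*A*CC*D^2*W + -3*x^2*A*CC*D*W^2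 + -1*x^2*A*CC*W^3 + -1*x^2*A*D^2*W^2 + -1*x^2*A*D*W^3 + -1*x^2*CC^3*D*W + -1*x^2*CC^3*W^2 + -3*x^2*CC^2*D^2*W + -4*x^2*CC^2*D*W^2 + -1*x^2*CC^2*W^3 + -1*x^2*CC*D^3*W + -4*x^2*CC*D^2*W^2 + -3*x^2*CC*D*W^3 + -1*x^2*D^3*W^2 + -1*x^2*D^2*W^3 + -1*x*A^2*CC^2*D*W + -1*x*A^2*CC*D^2*W + -1*x*A*CC^2*D^2*W + -2*x*A*CC^2*D*W^2 + -2*x*A*CC*D^2*W^2 + -1*x*A*CC*D*W^3 + -1*x*CC^3*D^2*W + -1*x*CC^2*D^3*W + -1*x*CC^2*D^2*W^2 + -1*x*CC^2*D*W^3 + -1*x*CC*D^2*W^3 + -1*CC^3*D^3*W + -1*CC^3*D^2*W^2 + -1*CC^2*D^3*W^2 + -1*CC^2*D^2*W^3 + 2*x^5*B + 8*x^4*A*B + -3*x^4*B*CC + -3*x^4*B*D + -2*x^4*B*W + 5*x^3*A^2*B + -2*x^3*A*B*CC + -2*x^3*A*B*D + -1*x^3*A*B*W + x^3*B^3 + -1*x^3*B*CC^2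 + -4*x^3*B*CC*D + -3*x^3*B*CC*W + -1*x^3*B*D^2 + -3*x^3*B*D*W + -1*x^3*B*W^2 + -1*x^2*A*B*CC^2 + -2*x^2*A*B*CC*D + -1*x^2*A*B*CC*W + -1*x^2*A*B*D^2 + -1*x^2*A*B*D*W + -2*x^2*B*CC^2*D + -1*x^2*B*CC^2*W + -2*x^2*B*CC*D^2 + -5*x^2*B*CC*D*W + -2*x^2*B*CC*W^2 + -1*x^2*B*D^2*W + -2*x^2*B*D*W^2 + -1*x^2*B*W^3 + -1*x*A*B*CC^2*D + -1*x*A*B*CC^2*W + -1*x*A*B*CC*D^2 + -2*x*A*B*CC*D*W + -1*x*A*B*D^2*W + -1*x*B*CC^2*D^2 + -2*x*B*CC^2*D*W + -1*x*B*CC^2*W^2 + -2*x*B*CC*D^2*W + -3*x*B*CC*D*W^2 + -1*x*B*CC*W^3 + -1*x*B*D^2*W^2 + -1*x*B*D*W^3 + -1*A*B*CC^2*D*W + -1*A*B*CC*D^2*W + -1*B*CC^2*D*W^2 + -1*B*CC*D^2*W^2 + -1*B*CC*D*W^3 + x^5 + 6*x^4*A + -2*x^4*CC + -2*x^4*D +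 -1*x^4*W + 9*x^3*A^2 + -3*x^3*A*CC + -3*x^3*A*D + -2*x^3*A*W + 2*x^3*B^2 + -1*x^3*CC^2 + -3*x^3*CC*D + -1*x^3*CC*W + -1*x^3*D^2 + -1*x^3*D*W + 4*x^2*A^3 + -1*x^2*A^2*CC + -1*x^2*A^2*D + -1*x^2*A^2*W + 3*x^2*A*B^2 + -1*x^2*A*CC^2 + -2*x^2*A*CC*D + -1*x^2*A*CC*W + -1*x^2*A*D^2 + -1*x^2*A*D*W + -1*x^2*B^2*CC + -1*x^2*B^2*D + -1*x^2*B^2*W + -2*x^2*CC^2*D + -2*x^2*CC^2*W + -2*x^2*CC*D^2 + -5*x^2*CC*D*W + -1*x^2*CC*W^2 + -2*x^2*D^2*W + -1*x^2*D*W^2 + -2*x*A*CC*D*W + -1*x*B^2*CC^2 + -2*x*B^2*CC*D + -1*x*B^2*CC*W + -1*x*B^2*D^2 + -1*x*B^2*D*W + -1*x*CC^3*D + -1*x*CC^3*W + -1*x*CC^2*D^2 + -3*x*CC^2*D*W + -1*x*CC^2*W^2 + -1*x*CC*D^3 + -3*x*CC*D^2*W + -1*x*CC*D*W^2 + -1*x*D^3*W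 + -1*x*D^2*W^2 + A*CC^2*D^2 + -1*B^2*CC^2*D + -1*B^2*CC*D^2 + -1*B^2*CC*D*W + -1*CC^3*D^2 + -1*CC^3*D*W + -1*CC^2*D^3 + -3*CC^2*D^2*W + -1*CC^2*D*W^2 + -1*CC*D^3*W + -1*CC*D^2*W^2 + 2*x^3*B + 7*x^2*A*B + -1*x^2*B*CC + -1*x^2*B*D + -1*x^2*B*W + 4*x*A^2*B + -2*x*B*CC*D + x^3 + 4*x^2*A + -1*x^2*CC + -1*x^2*D + -1*x^2*W + 4*x*A^2 + -1*x*A*W + x*B^2 + -1*x*CC*D + -1*x*CC*W + -1*x*D*W + 2*A^3 + -1*CC*D*W + 2*x*B + A*B + 2*A)*htwoQ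
  · intro h
    rw [h, AlgHom.id_apply, ← AdjoinRoot.mk_X] at hη
    have hd : p ∣ f - X := AdjoinRoot.mk_eq_mk.mp hη.symm
    have h4 : p.degree = 4 := by rw [hpdef]; compute_degree!
    have hle : (f - X).degree ≤ 3 := by rw [hfdef]; compute_degree
    have hz : f - X = 0 := Polynomial.eq_zero_of_dvd_of_degree_lt hd
      (lt_of_le_of_lt hle (by rw [h4]; norm_num))
    have hz' : (X^3 + C a * X^2 + C b * X + C a : F[X]) = 0 := by
      rw [hfdef] at hz; linear_combination hz
    have := congrArg (fun q => Polynomial.coeff q 3) hz'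
    simp [coeff_add, coeff_C_mul, coeff_X, coeff_C, coeff_X_pow] at this

/-- With deformation data `a, b, c, d, w ∈ k⸨t⸩` (char k = 2),
the endomorphism `η̄` of `A = k⸨t⸩[X]/(p_t)` induced by `X ↦ X·π(X)+X+a`
satisfies `η̄ ∘ η̄ = id` (so it is an automorphism) and `η̄ ≠ id`; hence `η̄`
has order exactly 2. -/
theorem stmt15 (k : Type*) [Field k] [CharP k 2]
    (a b c d w : LaurentSeries k) (ha : a ≠ 0) (hcd : c ≠ d)
    (hirr : Irreducible (X ^ 2 + C a * X + C b))
    (hfac : (X + C w) * (X + C c) * (X + C d) =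
      X * (X ^ 2 + C a * X + C b) + C a)
    (η : AdjoinRoot ((X ^ 2 + C a * X + C b) * (X + C c) * (X + C d) :
          Polynomial (LaurentSeries k)) →ₐ[LaurentSeries k]
        AdjoinRoot ((X ^ 2 + C a * X + C b) * (X + C c) * (X + C d) :
          Polynomial (LaurentSeries k)))
    (hη : η (AdjoinRoot.root _) =
      AdjoinRoot.mk _ (X * (X ^ 2 + C a * X + C b) + X + C a)) :
    η.comp η = AlgHom.id (LaurentSeries k)
        (AdjoinRoot ((X ^ 2 + C a * X + C b) * (X + C c) * (X + C d) :
          Polynomial (LaurentSeries k))) ∧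
      η ≠ AlgHom.id (LaurentSeries k)
        (AdjoinRoot ((X ^ 2 + C a * X + C b) * (X + C c) * (X + C d) :
          Polynomial (LaurentSeries k))) := by
  have htwo : (2 : LaurentSeries k) = 0 := by
    have h : (2 : LaurentSeries k) = algebraMap k (LaurentSeries k) 2 := (map_ofNat _ 2).symm
    rw [h, CharTwo.two_eq_zero, map_zero]
  exact aux (LaurentSeries k) htwo a b c d w hfac η hη
end

section
/- Let k be a field of characteristic 2, let F := k((t)), and let a, b ∈ F with a ≠ 0 and X² + aX + b irreducible in F[X]. Consider the 4-dimensional F-algebra Q with basis 1, i, j, k and multiplication determined by i² = b + a·i, j² = b, i·j = k, and j·i = a·j − k (the generalized quaternion algebra QuaternionAlgebra F b a b). Then Q is a central simple F-algebra: its center is F·1 and it has no two-sided ideals other than 0 and Q. -/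
open Polynomial LaurentSeries

set_option maxHeartbeats 1000000 in
/-- Let `F = k⸨t⸩` (char k = 2), `a ≠ 0`, `X² + aX + b`
irreducible over `F`. Let `Q` be the 4-dimensional `F`-algebra with basis
`1, i, j, k` and multiplication determined by `i² = b + a·i`, `j² = b`,
`i·j = k`, `j·i = a·j − k` (the generalized quaternion algebra
`QuaternionAlgebra F b a b`). Then `Q` is central simple over `F`: its center
is `F·1` and it has no two-sided ideals other than `0` and `Q`. -/
theorem stmt18 (k : Type*) [Field k] [CharP k 2]
    (a b : LaurentSeries k) (ha : a ≠ 0)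
    (hirr : Irreducible (X ^ 2 + C a * X + C b))
    (Q : Type*) [Ring Q] [Algebra (LaurentSeries k) Q]
    (B : Module.Basis (Fin 4) (LaurentSeries k) Q)
    (hone : B 0 = 1)
    (hii : B 1 * B 1 = algebraMap (LaurentSeries k) Q b +
      algebraMap (LaurentSeries k) Q a * B 1)
    (hjj : B 2 * B 2 = algebraMap (LaurentSeries k) Q b)
    (hij : B 1 * B 2 = B 3)
    (hji : B 2 * B 1 = algebraMap (LaurentSeries k) Q a * B 2 - B 3) :
    Subalgebra.center (LaurentSeries k) Q = ⊥ ∧ IsSimpleRing Q := by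
  haveI : CharP (LaurentSeries k) 2 :=
    charP_of_injective_algebraMap (algebraMap k (LaurentSeries k)).injective 2
  have h2 : (2 : LaurentSeries k) = 0 := by
    exact_mod_cast CharP.cast_eq_zero (LaurentSeries k) 2
  have hchar : ∀ x : Q, x + x = 0 := by
    intro x; rw [← two_smul (LaurentSeries k) x, h2, zero_smul]
  have hneg : ∀ x : Q, -x = x := fun x => neg_eq_of_add_eq_zero_left (hchar x)
  have hcanc : ∀ u v : Q, u + (v + u) = v := by
    intro u v; rw [add_comm v u, ← add_assoc, hchar, zero_add]
  have hcanc' : ∀ u v : Q, u + (u + v) = v := by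
    intro u v; rw [← add_assoc, hchar, zero_add]
  have zsmul : ∀ u : Q, (0 : LaurentSeries k) • u = 0 := fun u => by
    rw [Algebra.smul_def, map_zero, zero_mul]
  have sadd : ∀ (c : LaurentSeries k) (u v : Q), c • u + c • v = c • (u + v) :=
    fun c u v => (smul_add c u v).symm
  have ssmul : ∀ (c d : LaurentSeries k) (u : Q), c • d • u = (c * d) • u :=
    fun c d u => smul_smul c d u
  -- b ≠ 0
  have hb : b ≠ 0 := by
    intro hb0
    subst hb0
    have hfac : X ^ 2 + C a * X + C (0 : LaurentSeries k) = X * (X + C a) := by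
      rw [map_zero, add_zero, mul_add, ← sq, mul_comm X (C a)]
    rcases hirr.isUnit_or_isUnit hfac with h | h
    · exact Polynomial.not_isUnit_X h
    · refine absurd h (Polynomial.not_isUnit_of_natDegree_pos _ ?_)
      rw [Polynomial.natDegree_X_add_C]
      norm_num
  set i := B 1 with hi_def
  set j := B 2 with hj_def
  set kq := B 3 with hk_def
  -- rewrite relations in smul form
  have hii' : i * i = b • (1 : Q) + a • i := by
    rw [hii, Algebra.algebraMap_eq_smul_one, Algebra.algebraMap_eq_smul_one,
      smul_mul_assoc, one_mul]
  have hjj' : j * j = b • (1 : Q) := by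
    rw [hjj, Algebra.algebraMap_eq_smul_one]
  have hji' : j * i = a • j + kq := by
    rw [hji, Algebra.algebraMap_eq_smul_one, smul_mul_assoc, one_mul,
      sub_eq_add_neg, hneg]
  -- derived products
  have hik : i * kq = b • j + a • kq := by
    rw [← hij, ← mul_assoc, hii', add_mul, smul_mul_assoc, smul_mul_assoc,
      one_mul, hij]
  have hki : kq * i = b • j := by
    have h : kq * i = a • kq + (b • j + a • kq) := by
      rw [← hij, mul_assoc, hji', mul_add, mul_smul_comm, hij, hik]
    rw [h, hcanc]
  have hkj : kq * j = b • i := by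
    rw [← hij, mul_assoc, hjj', mul_smul_comm, mul_one]
  have hjk : j * kq = (a * b) • (1 : Q) + b • i := by
    rw [← hij, ← mul_assoc, hji', add_mul, smul_mul_assoc, hjj', hkj,
      ssmul a b (1 : Q)]
  have indep : ∀ p q r s : LaurentSeries k,
      p • B 0 + q • B 1 + r • B 2 + s • B 3 = (0 : Q) →
      p = 0 ∧ q = 0 ∧ r = 0 ∧ s = 0 := by
    intro p q r s h
    have h' : ∑ n : Fin 4, (![p, q, r, s] n) • B n = 0 := by
      rw [Fin.sum_univ_four]
      simpa using h
    have h'' := Fintype.linearIndependent_iff.mp B.linearIndependent _ h'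
    exact ⟨h'' 0, h'' 1, h'' 2, h'' 3⟩
  have hx_expand : ∀ x : Q, x = (B.repr x 0) • (1 : Q) + (B.repr x 1) • i
      + (B.repr x 2) • j + (B.repr x 3) • kq := by
    intro x
    conv_lhs => rw [← B.sum_repr x]
    rw [Fin.sum_univ_four, hone]
  -- commutator with j
  have hcomm_j : ∀ x : Q, x * j + j * x =
      ((B.repr x 1) * a) • j + ((B.repr x 3) * (a * b)) • (1 : Q) := by
    intro x
    have key : x * j + j * x =
        ((B.repr x 0) • ((1 : Q) * j) + (B.repr x 0) • (j * (1 : Q))) +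
        (((B.repr x 1) • (i * j) + (B.repr x 1) • (j * i)) +
        (((B.repr x 2) • (j * j) + (B.repr x 2) • (j * j)) +
        ((B.repr x 3) • (kq * j) + (B.repr x 3) • (j * kq)))) := by
      conv_lhs => rw [hx_expand x]
      simp only [add_mul, mul_add, smul_mul_assoc, mul_smul_comm]
      abel
    rw [key, one_mul, mul_one, hchar ((B.repr x 0) • j), zero_add,
      hchar ((B.repr x 2) • (j * j)), zero_add,
      hij, hji', hkj, hjk,
      sadd (B.repr x 1), hcanc kq (a • j), ssmul,
      sadd (B.repr x 3), hcanc (b • i) ((a * b) • (1 : Q)), ssmul]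
  -- commutator with i
  have hcomm_i : ∀ x : Q, x * i + i * x =
      ((B.repr x 2) * a) • j + ((B.repr x 3) * a) • kq := by
    intro x
    have key : x * i + i * x =
        ((B.repr x 0) • ((1 : Q) * i) + (B.repr x 0) • (i * (1 : Q))) +
        (((B.repr x 1) • (i * i) + (B.repr x 1) • (i * i)) +
        (((B.repr x 2) • (j * i) + (B.repr x 2) • (i * j)) +
        ((B.repr x 3) • (kq * i) + (B.repr x 3) • (i * kq)))) := by
      conv_lhs => rw [hx_expand x]
      simp only [add_mul, mul_add, smul_mul_assoc, mul_smul_comm]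
      abel
    have inner2 : (a • j + kq) + kq = a • j := by
      rw [add_assoc, hchar, add_zero]
    rw [key, one_mul, mul_one, hchar ((B.repr x 0) • i), zero_add,
      hchar ((B.repr x 1) • (i * i)), zero_add,
      hji', hij, hki, hik,
      sadd (B.repr x 2), inner2, ssmul,
      sadd (B.repr x 3), hcanc' (b • j) (a • kq), ssmul]
  constructor
  · -- center = ⊥
    apply le_antisymm
    · intro x hx
      rw [Subalgebra.mem_center_iff] at hx
      have hxj : x * j + j * x = 0 := by rw [hx j, hchar]
      have hxi : x * i + i * x = 0 := by rw [hx i, hchar]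
      rw [hcomm_j x] at hxj
      rw [hcomm_i x] at hxi
      have e1 : ((B.repr x 3) * (a * b)) • B 0 + (0 : LaurentSeries k) • B 1
          + ((B.repr x 1) * a) • B 2 + (0 : LaurentSeries k) • B 3 = 0 := by
        rw [zsmul, zsmul, add_zero,
          add_zero, hone, add_comm]
        exact hxj
      have e2 : (0 : LaurentSeries k) • B 0 + (0 : LaurentSeries k) • B 1
          + ((B.repr x 2) * a) • B 2 + ((B.repr x 3) * a) • B 3 = 0 := by
        rw [zsmul, zsmul, zero_add,
          zero_add]
        exact hxi
      obtain ⟨h30, -, h10, -⟩ := indep _ _ _ _ e1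
      obtain ⟨-, -, h20, -⟩ := indep _ _ _ _ e2
      have hc1 : B.repr x 1 = 0 := by
        rcases mul_eq_zero.mp h10 with h | h
        · exact h
        · exact absurd h ha
      have hc3 : B.repr x 3 = 0 := by
        rcases mul_eq_zero.mp h30 with h | h
        · exact h
        · exact absurd h (mul_ne_zero ha hb)
      have hc2 : B.repr x 2 = 0 := by
        rcases mul_eq_zero.mp h20 with h | h
        · exact h
        · exact absurd h ha
      have hxe := hx_expand x
      rw [hc1, hc2, hc3, zsmul, zsmul, zsmul, add_zero, add_zero, add_zero] at hxe
      rw [Algebra.mem_bot]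
      exact ⟨B.repr x 0, by rw [Algebra.algebraMap_eq_smul_one, ← hxe]⟩
    · intro x hx
      rw [Algebra.mem_bot] at hx
      obtain ⟨r, rfl⟩ := hx
      rw [Subalgebra.mem_center_iff]
      intro y
      exact (Algebra.commutes r y).symm
  · -- simplicity
    haveI : Nontrivial Q := nontrivial_of_ne (B 0) 0 (B.ne_zero 0)
    refine ⟨⟨fun I => ?_⟩⟩
    by_cases hI : I = ⊥
    · exact Or.inl hI
    right
    obtain ⟨x, hxI, hx0⟩ : ∃ x ∈ I, x ≠ 0 := by
      by_contra h
      push_neg at h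
      exact hI (by
        ext y
        simp only [TwoSidedIdeal.mem_bot]
        exact ⟨fun hy => h y hy, fun hy => hy ▸ I.zero_mem⟩)
    have hsmul : ∀ (c : LaurentSeries k) (u : Q), c ≠ 0 → c • u ∈ I → u ∈ I := by
      intro c u hc hcu
      have h : (c⁻¹ : LaurentSeries k) • (c • u) ∈ I := by
        rw [Algebra.smul_def]
        exact I.mul_mem_left _ _ hcu
      rwa [inv_smul_smul₀ hc] at h
    have hjI : j ∈ I → (1 : Q) ∈ I := by
      intro hj
      have h : j * j ∈ I := I.mul_mem_left _ _ hj
      rw [hjj'] at h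
      exact hsmul b 1 hb h
    suffices h1 : (1 : Q) ∈ I by exact TwoSidedIdeal.eq_top I h1
    have hyI : x * j + j * x ∈ I :=
      I.add_mem (I.mul_mem_right _ _ hxI) (I.mul_mem_left _ _ hxI)
    rw [hcomm_j x] at hyI
    by_cases hc1 : B.repr x 1 = 0
    · rw [hc1, zero_mul, zsmul, zero_add] at hyI
      by_cases hc3 : B.repr x 3 = 0
      · have hwI : x * i + i * x ∈ I :=
          I.add_mem (I.mul_mem_right _ _ hxI) (I.mul_mem_left _ _ hxI)
        rw [hcomm_i x, hc3, zero_mul, zsmul, add_zero] at hwI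
        by_cases hc2 : B.repr x 2 = 0
        · have hxe := hx_expand x
          rw [hc1, hc2, hc3, zsmul, zsmul, zsmul, add_zero, add_zero,
            add_zero] at hxe
          have hc0 : B.repr x 0 ≠ 0 := by
            intro h0
            exact hx0 (by rw [hxe, h0, zsmul])
          exact hsmul _ _ hc0 (hxe ▸ hxI)
        · exact hjI (hsmul _ _ (mul_ne_zero hc2 ha) hwI)
      · exact hsmul _ _ (mul_ne_zero hc3 (mul_ne_zero ha hb)) hyI
    · -- bracket with i again to isolate j
      set y := ((B.repr x 1) * a) • j + ((B.repr x 3) * (a * b)) • (1 : Q) with hy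
      have hwI : y * i + i * y ∈ I :=
        I.add_mem (I.mul_mem_right _ _ hyI) (I.mul_mem_left _ _ hyI)
      have hz : y * i + i * y = ((B.repr x 1) * a * a) • j := by
        have key : y * i + i * y =
            (((B.repr x 1) * a) • (j * i) + ((B.repr x 1) * a) • (i * j)) +
            (((B.repr x 3) * (a * b)) • ((1 : Q) * i) +
             ((B.repr x 3) * (a * b)) • (i * (1 : Q))) := by
          rw [hy]
          simp only [add_mul, mul_add, smul_mul_assoc, mul_smul_comm]
          abel
        have inner2 : (a • j + kq) + kq = a • j := by
          rw [add_assoc, hchar, add_zero]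
        rw [key, one_mul, mul_one, hchar (((B.repr x 3) * (a * b)) • i), add_zero,
          hji', hij, sadd ((B.repr x 1) * a), inner2, ssmul]
      rw [hz] at hwI
      exact hjI (hsmul _ _ (mul_ne_zero (mul_ne_zero hc1 ha) ha) hwI)
end
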